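/- arXiv:1804.02578 — 13 statements merged into one kernel-verified Lean document; each statement's English description precedes it below -/
import Mathlib

section
/- Every cyclic permutation of {1,2,...,n} with n = (k-1)(ℓ-1)+2, for k,ℓ ≥ 1, contains either an increasing cyclic sub-permutation of length k+1 or a decreasing cyclic sub-permutation of length ℓ+1. -/
/-!
Rotate the cycle so that `1` comes first; the remaining `(k-1)(ℓ-1)+1` entries all exceed `1`.
By the Erdős–Szekeres theorem they contain an increasing sublist of length `k`, which `1`
extends on the left, or a decreasing one of length `ℓ`, which `1` extends on the right once
the cycle is rotated one step further.

For Erdős–Szekeres, bound the length of a list without increasing sublists longer than `r` and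
decreasing ones longer than `s` by induction on `r`: the right-to-left maxima form a decreasing
sublist, so there are at most `s` of them, and every nonempty increasing sublist of the remaining
entries extends to the right by a larger entry, so the remaining entries satisfy the bound `r - 1`.
-/

/-- The cyclic permutation represented by list `c` has an increasing cyclic
sub-permutation of length `m`: some rotation of `c` has a strictly increasing
sublist of length `m`. -/
def IncCycSub (c : List ℕ) (m : ℕ) : Prop :=
  ∃ (r : ℕ) (s : List ℕ), s.Sublist (c.rotate r) ∧ s.length = m ∧ s.Pairwise (· < ·)

/-- Decreasing cyclic sub-permutation of length `m`. -/
def DecCycSub (c : List ℕ) (m : ℕ) : Prop :=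
  ∃ (r : ℕ) (s : List ℕ), s.Sublist (c.rotate r) ∧ s.length = m ∧ s.Pairwise (· > ·)

namespace List

theorem exists_rotate_eq_cons {α : Type*} {a : α} {l : List α} (h : a ∈ l) :
    ∃ n t, l.rotate n = a :: t := by
  obtain ⟨s, t, rfl⟩ := append_of_mem h
  exact ⟨s.length, t ++ s, rotate_append_length_eq s (a :: t)⟩

theorem Sublist.exists_sublist_length_eq_pairwise {α : Type*} {R : α → α → Prop}
    {t l : List α} (hsub : t <+ l) (ht : t.Pairwise R) {m : ℕ} (hm : m ≤ t.length) :
    ∃ u, u <+ l ∧ u.length = m ∧ u.Pairwise R :=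
  ⟨t.take m, (take_sublist m t).trans hsub, length_take_of_le hm, ht.sublist (take_sublist m t)⟩

variable {α : Type*} [LinearOrder α]

def rightMaxima : List α → List α
  | [] => []
  | a :: l => if ∀ b ∈ l, b < a then a :: rightMaxima l else rightMaxima l

def rightNonMaxima : List α → List α
  | [] => []
  | a :: l => if ∀ b ∈ l, b < a then rightNonMaxima l else a :: rightNonMaxima l

theorem rightMaxima_sublist : ∀ l : List α, rightMaxima l <+ l
  | [] => .slnil
  | a :: l => by
    unfold rightMaxima
    split_ifs
    exacts [(rightMaxima_sublist l).cons_cons a, (rightMaxima_sublist l).cons a]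

theorem rightNonMaxima_sublist : ∀ l : List α, rightNonMaxima l <+ l
  | [] => .slnil
  | a :: l => by
    unfold rightNonMaxima
    split_ifs
    exacts [(rightNonMaxima_sublist l).cons a, (rightNonMaxima_sublist l).cons_cons a]

theorem length_rightMaxima_add_length_rightNonMaxima :
    ∀ l : List α, (rightMaxima l).length + (rightNonMaxima l).length = l.length
  | [] => rfl
  | a :: l => by
    have := length_rightMaxima_add_length_rightNonMaxima l
    unfold rightMaxima rightNonMaxima
    split_ifs <;> simp only [length_cons] <;> omega

theorem pairwise_gt_rightMaxima : ∀ l : List α, (rightMaxima l).Pairwise (· > ·)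
  | [] => .nil
  | a :: l => by
    unfold rightMaxima
    split_ifs with h
    · exact pairwise_cons.2
        ⟨fun b hb => h b ((rightMaxima_sublist l).subset hb), pairwise_gt_rightMaxima l⟩
    · exact pairwise_gt_rightMaxima l

theorem exists_append_sublist_of_sublist_rightNonMaxima :
    ∀ {l : List α}, l.Nodup → ∀ {t : List α}, t <+ rightNonMaxima l → t ≠ [] →
      t.Pairwise (· < ·) → ∃ z, t ++ [z] <+ l ∧ (t ++ [z]).Pairwise (· < ·)
  | [], _, t, ht, hne, _ => absurd (sublist_nil.1 ht) hne
  | a :: l, hl, t, ht, hne, hinc => by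
    have ih := @exists_append_sublist_of_sublist_rightNonMaxima l (nodup_cons.1 hl).2
    unfold rightNonMaxima at ht
    split_ifs at ht with hmax
    · obtain ⟨z, hz, hzinc⟩ := ih ht hne hinc
      exact ⟨z, hz.cons a, hzinc⟩
    rcases sublist_cons_iff.1 ht with ht | ⟨t', rfl, ht'⟩
    · obtain ⟨z, hz, hzinc⟩ := ih ht hne hinc
      exact ⟨z, hz.cons a, hzinc⟩
    rcases eq_or_ne t' [] with rfl | hne'
    · simp only [not_forall, not_lt] at hmax
      obtain ⟨z, hz, haz⟩ := hmax
      have hne : a ≠ z := fun h => (nodup_cons.1 hl).1 (h ▸ hz)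
      exact ⟨z, (singleton_sublist.2 hz).cons_cons a, by simpa using lt_of_le_of_ne haz hne⟩
    · obtain ⟨z, hz, hzinc⟩ := ih ht' hne' (pairwise_cons.1 hinc).2
      refine ⟨z, hz.cons_cons a, pairwise_cons.2 ⟨?_, hzinc⟩⟩
      obtain ⟨x, hx⟩ := exists_mem_of_ne_nil t' hne'
      have hax : a < x := rel_of_pairwise_cons hinc hx
      intro y hy
      rcases mem_append.1 hy with hy | hy
      · exact rel_of_pairwise_cons hinc hy
      · exact hax.trans ((pairwise_append.1 hzinc).2.2 x hx y hy)

theorem Nodup.length_le_mul {r s : ℕ} :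
    ∀ {l : List α}, l.Nodup → (∀ t, t <+ l → t.Pairwise (· < ·) → t.length ≤ r) →
      (∀ t, t <+ l → t.Pairwise (· > ·) → t.length ≤ s) → l.length ≤ r * s := by
  induction r with
  | zero =>
    intro l _ hinc _
    cases l with
    | nil => simp
    | cons a l => simpa using hinc [a] (singleton_sublist.2 mem_cons_self) (pairwise_singleton _ a)
  | succ r ih =>
    intro l hl hinc hdec
    have hN := rightNonMaxima_sublist l
    have hNinc : ∀ t, t <+ rightNonMaxima l → t.Pairwise (· < ·) → t.length ≤ r := by
      intro t ht htinc
      rcases eq_or_ne t [] with rfl | hne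
      · simp
      obtain ⟨z, hz, hzinc⟩ := exists_append_sublist_of_sublist_rightNonMaxima hl ht hne htinc
      simpa using hinc _ hz hzinc
    have hlenN := ih (hl.sublist hN) hNinc fun t ht => hdec t (ht.trans hN)
    have hlenM := hdec _ (rightMaxima_sublist l) (pairwise_gt_rightMaxima l)
    have := length_rightMaxima_add_length_rightNonMaxima l
    rw [Nat.succ_mul]
    omega

theorem Nodup.exists_sublist_increasing_or_decreasing {l : List α} (hl : l.Nodup) {r s : ℕ}
    (h : r * s < l.length) :
    (∃ t, t <+ l ∧ t.length = r + 1 ∧ t.Pairwise (· < ·)) ∨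
      ∃ t, t <+ l ∧ t.length = s + 1 ∧ t.Pairwise (· > ·) := by
  by_contra! hneither
  refine h.not_ge (hl.length_le_mul (fun t ht htinc => ?_) fun t ht htdec => ?_)
  · by_contra! hlong
    obtain ⟨u, hu, hlen, huinc⟩ := ht.exists_sublist_length_eq_pairwise htinc hlong
    exact hneither.1 u hu hlen huinc
  · by_contra! hlong
    obtain ⟨u, hu, hlen, hudec⟩ := ht.exists_sublist_length_eq_pairwise htdec hlong
    exact hneither.2 u hu hlen hudec

end List

theorem IncCycSub.of_sublist_rotate {c t : List ℕ} {r m : ℕ} (ht : t.Sublist (c.rotate r))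
    (hinc : t.Pairwise (· < ·)) (hm : m ≤ t.length) : IncCycSub c m :=
  ⟨r, ht.exists_sublist_length_eq_pairwise hinc hm⟩

theorem DecCycSub.of_sublist_rotate {c t : List ℕ} {r m : ℕ} (ht : t.Sublist (c.rotate r))
    (hdec : t.Pairwise (· > ·)) (hm : m ≤ t.length) : DecCycSub c m :=
  ⟨r, ht.exists_sublist_length_eq_pairwise hdec hm⟩

theorem cyclic_erdos_szekeres_general (k ℓ : ℕ) (c : List ℕ)
    (hc : c.Perm (List.range' 1 ((k-1)*(ℓ-1)+2))) :
    IncCycSub c (k+1) ∨ DecCycSub c (ℓ+1) := by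
  obtain ⟨r, t, hrot⟩ :=
    List.exists_rotate_eq_cons (a := 1) (hc.mem_iff.2 (List.mem_range'_1.2 (by omega)))
  have hperm : (1 :: t).Perm (List.range' 1 ((k-1)*(ℓ-1)+2)) := hrot ▸ (c.rotate_perm r).trans hc
  obtain ⟨h1t, htnodup⟩ := List.nodup_cons.1 (hperm.nodup_iff.2 (List.nodup_range' ..))
  have hgt : ∀ x ∈ t, 1 < x := fun x hx => by
    have := List.mem_range'_1.1 (hperm.subset (List.mem_cons_of_mem 1 hx))
    have : x ≠ 1 := fun h => h1t (h ▸ hx)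
    omega
  have htlen : (k-1)*(ℓ-1) < t.length := by
    have := hperm.length_eq
    simp only [List.length_cons, List.length_range'] at this
    omega
  rcases htnodup.exists_sublist_increasing_or_decreasing htlen with
    ⟨u, hu, hulen, hinc⟩ | ⟨u, hu, hulen, hdec⟩
  · refine .inl (IncCycSub.of_sublist_rotate (hrot ▸ hu.cons_cons 1) ?_
      (by rw [List.length_cons]; omega))
    exact List.pairwise_cons.2 ⟨fun x hx => hgt x (hu.subset hx), hinc⟩
  · have hrot' : c.rotate (r + 1) = t ++ [1] := by rw [← List.rotate_rotate, hrot]; simp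
    refine .inr (DecCycSub.of_sublist_rotate (hrot' ▸ hu.append (.refl [1])) ?_
      (by rw [List.length_append, List.length_singleton]; omega))
    refine List.pairwise_append.2 ⟨hdec, List.pairwise_singleton _ _, ?_⟩
    simpa using fun x hx => hgt x (hu.subset hx)

theorem cyclic_erdos_szekeres (k ℓ : ℕ) (hk : 1 ≤ k) (hl : 1 ≤ ℓ) (c : List ℕ)
    (hc : c.Perm (List.range' 1 ((k-1)*(ℓ-1)+2))) :
    IncCycSub c (k+1) ∨ DecCycSub c (ℓ+1) :=
  cyclic_erdos_szekeres_general k ℓ c hc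
end

section
/- For k,ℓ ≥ 2, the cyclic permutation π = (1, a_1, ..., a_{(k-1)(ℓ-1)}) of {1,...,(k-1)(ℓ-1)+1}, where a_{(j-1)(ℓ-1)+i} = (ℓ-1-i)(k-1)+j+1 for all i ∈ [ℓ-1], j ∈ [k-1], has no increasing cyclic sub-permutation of length k+1 and no decreasing cyclic sub-permutation of length ℓ+1. -/
/-!
With `K = k - 1` and `L = ℓ - 1`, extend `a` periodically: position `p` carries level
`L - 1 - p % L` and column `p / L % K`, and its entry is `level * K + column + 2`. The rotations of
`a` are the windows of length `K * L` of this periodic word. Inside a block of `L` consecutive positions the entries decrease, so an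
increasing pair strictly increases the block index `p / L`. A decreasing pair strictly increases
`p % L + p / L / K`: inside one period it must climb levels, and across a period boundary it
cannot descend one. A window of length `K * L` meets at most `K + 1` blocks and two periods, `a`
itself only `K` blocks and one period. The extra entry `1` of the cycle is the smallest, so it
can only start an increasing or end a decreasing cyclic subsequence, whose remaining entries then
lie in `a` itself.
-/

namespace List

variable {α β : Type*}

theorem length_le_of_sublist_map_of_pairwise {R : β → β → Prop} {f : α → β} {l : List α}
    {s : List β} (φ : α → ℕ) {lo hi : ℕ} (hs : s <+ l.map f) (hR : s.Pairwise R)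
    (hφ : l.Pairwise fun x y => R (f x) (f y) → φ x < φ y)
    (hφ_mem : ∀ x ∈ l, lo ≤ φ x ∧ φ x < hi) : s.length ≤ hi - lo := by
  obtain ⟨l', hl', rfl⟩ := sublist_map_iff.mp hs
  have hmono : (l'.map φ).Pairwise (· < ·) :=
    pairwise_map.mpr (((hφ.sublist hl').and (pairwise_map.mp hR)).imp fun h => h.1 h.2)
  have hsub : l'.map φ ⊆ range' lo (hi - lo) := by
    intro y hy
    obtain ⟨x, hx, rfl⟩ := mem_map.mp hy
    have := hφ_mem x (hl'.subset hx)
    rw [mem_range'_1]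
    omega
  simpa using (Nodup.subperm (hmono.imp ne_of_lt) hsub).length_le

theorem exists_rotate_cons_eq (x : α) (w : List α) (r : ℕ) :
    ∃ u ≤ w.length, (x :: w).rotate r = w.drop u ++ x :: w.take u := by
  rw [← rotate_mod, length_cons]
  have hr : r % (w.length + 1) < w.length + 1 := Nat.mod_lt _ w.length.succ_pos
  rcases h : r % (w.length + 1) with _ | u
  · exact ⟨w.length, le_rfl, by simp⟩
  · refine ⟨u, by omega, ?_⟩
    rw [rotate_eq_drop_append_take (by simp; omega), drop_succ_cons, take_succ_cons]

theorem Sublist.sublist_or_eq_append_cons {s X Y : List α} {x : α} (h : s <+ X ++ x :: Y) :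
    s <+ X ++ Y ∨ ∃ s₁ s₂, s = s₁ ++ x :: s₂ ∧ s₁ <+ X ∧ s₂ <+ Y := by
  obtain ⟨s₁, s₂, rfl, h₁, h₂⟩ := sublist_append_iff.mp h
  rcases sublist_cons_iff.mp h₂ with h₂ | ⟨s₃, rfl, h₃⟩
  · exact .inl (h₁.append h₂)
  · exact .inr ⟨s₁, s₃, rfl, h₁, h₃⟩

end List

theorem Nat.div_le_div_add_of_lt_add_mul {p u K L : ℕ} (hp : p < u + K * L) :
    p / L ≤ u / L + K := by
  rcases L.eq_zero_or_pos with rfl | hL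
  · simp
  calc p / L ≤ (u + K * L) / L := Nat.div_le_div_right hp.le
    _ = u / L + K := Nat.add_mul_div_right _ _ hL

/-- For `p < K * L` this is the paper's `a_{p+1}`, with `K = k - 1`, `L = ℓ - 1` and
`p = (j - 1) * L + i - 1`; for larger `p` it is the periodic extension. -/
def extremalEntry (K L p : ℕ) : ℕ := (L - 1 - p % L) * K + p / L % K + 2

def extremalWord (K L : ℕ) : List ℕ := (List.range (K * L)).map (extremalEntry K L)

section

variable {K L : ℕ}

theorem extremalEntry_mod (p : ℕ) :
    extremalEntry K L (p % (K * L)) = extremalEntry K L p := by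
  unfold extremalEntry
  rw [Nat.mul_comm K L, Nat.mod_mod_of_dvd p (dvd_mul_right L K), Nat.mod_mul_right_div_self,
    Nat.mod_mod]

theorem extremalWord_rotate (u : ℕ) :
    (extremalWord K L).rotate u = (List.range' u (K * L)).map (extremalEntry K L) := by
  apply List.ext_getElem (by simp [extremalWord])
  intro i _ _
  simp [extremalWord, List.getElem_rotate, extremalEntry_mod, Nat.add_comm u i]

theorem one_lt_of_mem_extremalWord {x : ℕ} (hx : x ∈ extremalWord K L) : 1 < x := by
  obtain ⟨p, -, rfl⟩ := List.mem_map.mp hx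
  unfold extremalEntry
  omega

theorem div_lt_div_of_extremalEntry_lt {p q : ℕ} (hpq : p < q)
    (h : extremalEntry K L p < extremalEntry K L q) : p / L < q / L := by
  refine lt_of_le_of_ne (Nat.div_le_div_right hpq.le) fun hdiv => h.not_ge ?_
  have hmod : p % L < q % L := by
    have := Nat.div_add_mod p L
    have := Nat.div_add_mod q L
    rw [hdiv] at *
    omega
  have : (L - 1 - q % L) * K ≤ (L - 1 - p % L) * K := Nat.mul_le_mul_right _ (by omega)
  unfold extremalEntry
  rw [hdiv]
  omega

theorem mod_add_div_div_lt_of_extremalEntry_lt (hK : 0 < K) {p q : ℕ} (hpq : p < q)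
    (h : extremalEntry K L q < extremalEntry K L p) : p % L + p / L / K < q % L + q / L / K := by
  rcases L.eq_zero_or_pos with rfl | hL
  · simp [extremalEntry] at h
  unfold extremalEntry at h
  have hblock : p / L ≤ q / L := Nat.div_le_div_right hpq.le
  rcases (Nat.div_le_div_right (c := K) hblock).lt_or_eq with hperiod | hperiod
  · -- across a period boundary the level cannot drop, as columns are smaller than `K`
    suffices p % L ≤ q % L by omega
    by_contra! hmod
    have : (L - 1 - p % L + 1) * K ≤ (L - 1 - q % L) * K :=
      Nat.mul_le_mul_right _ (by have := Nat.mod_lt p hL; omega)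
    have := Nat.mod_lt (p / L) hK
    rw [add_one_mul] at *
    omega
  · suffices p % L < q % L by omega
    by_contra! hmod
    have : (L - 1 - p % L) * K ≤ (L - 1 - q % L) * K := Nat.mul_le_mul_right _ (by omega)
    have := Nat.mod_add_div (p / L) K
    have := Nat.mod_add_div (q / L) K
    rw [hperiod] at *
    omega

theorem length_le_of_sublist_extremalWord_of_pairwise_lt {s : List ℕ}
    (hs : s.Sublist (extremalWord K L)) (h : s.Pairwise (· < ·)) : s.length ≤ K := by
  simpa using List.length_le_of_sublist_map_of_pairwise (fun p => p / L) (lo := 0) hs h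
    (List.pairwise_lt_range.imp div_lt_div_of_extremalEntry_lt)
    fun p hp => ⟨Nat.zero_le _, Nat.div_lt_of_lt_mul (by rw [List.mem_range] at hp; linarith)⟩

theorem length_le_of_sublist_rotate_extremalWord_of_pairwise_lt {s : List ℕ} (u : ℕ)
    (hs : s.Sublist ((extremalWord K L).rotate u)) (h : s.Pairwise (· < ·)) :
    s.length ≤ K + 1 := by
  rw [extremalWord_rotate] at hs
  have := List.length_le_of_sublist_map_of_pairwise (fun p => p / L) (lo := u / L)
    (hi := u / L + K + 1) hs h ((List.pairwise_lt_range' 1).imp div_lt_div_of_extremalEntry_lt)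
    fun p hp => by
      rw [List.mem_range'_1] at hp
      exact ⟨Nat.div_le_div_right hp.1, Nat.lt_succ_of_le (Nat.div_le_div_add_of_lt_add_mul hp.2)⟩
  omega

theorem length_le_of_sublist_extremalWord_of_pairwise_gt {s : List ℕ}
    (hs : s.Sublist (extremalWord K L)) (h : s.Pairwise (· > ·)) : s.length ≤ L := by
  rcases K.eq_zero_or_pos with rfl | hK
  · simp [List.sublist_nil.mp (by simpa [extremalWord] using hs)]
  simpa using List.length_le_of_sublist_map_of_pairwise (fun p => p % L + p / L / K) (lo := 0)
    hs h (List.pairwise_lt_range.imp (mod_add_div_div_lt_of_extremalEntry_lt hK))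
    fun p hp => by
      rw [List.mem_range] at hp
      have hL : 0 < L := Nat.pos_of_ne_zero (by rintro rfl; simp at hp)
      have : p / L / K = 0 := Nat.div_eq_of_lt (Nat.div_lt_of_lt_mul (by linarith))
      have := Nat.mod_lt p hL
      omega

theorem length_le_of_sublist_rotate_extremalWord_of_pairwise_gt {s : List ℕ} (u : ℕ)
    (hs : s.Sublist ((extremalWord K L).rotate u)) (h : s.Pairwise (· > ·)) :
    s.length ≤ L + 1 := by
  rcases K.eq_zero_or_pos with rfl | hK
  · simp [List.sublist_nil.mp (by simpa [extremalWord] using hs)]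
  rw [extremalWord_rotate] at hs
  have := List.length_le_of_sublist_map_of_pairwise (fun p => p % L + p / L / K)
    (lo := u / L / K) (hi := u / L / K + L + 1) hs h
    ((List.pairwise_lt_range' 1).imp (mod_add_div_div_lt_of_extremalEntry_lt hK)) fun p hp => by
      rw [List.mem_range'_1] at hp
      have hL : 0 < L := Nat.pos_of_ne_zero (by rintro rfl; simp at hp; omega)
      have hperiod : p / L / K ≤ u / L / K + 1 := by
        rw [← Nat.add_div_right _ hK]
        exact Nat.div_le_div_right (Nat.div_le_div_add_of_lt_add_mul hp.2)
      have := Nat.div_le_div_right (c := K) (Nat.div_le_div_right (c := L) hp.1)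
      have := Nat.mod_lt p hL
      omega
  omega

theorem le_add_one_of_incCycSub_extremalWord {m : ℕ}
    (h : IncCycSub (1 :: extremalWord K L) m) : m ≤ K + 1 := by
  obtain ⟨r, s, hs, rfl, hinc⟩ := h
  obtain ⟨u, hu, hrot⟩ := List.exists_rotate_cons_eq 1 (extremalWord K L) r
  rw [hrot] at hs
  rcases hs.sublist_or_eq_append_cons with hs | ⟨s₁, s₂, rfl, hs₁, hs₂⟩
  · rw [← List.rotate_eq_drop_append_take hu] at hs
    exact length_le_of_sublist_rotate_extremalWord_of_pairwise_lt u hs hinc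
  · obtain rfl : s₁ = [] := List.eq_nil_iff_forall_not_mem.mpr fun x hx => by
      have := (List.pairwise_append.mp hinc).2.2 x hx 1 List.mem_cons_self
      have := one_lt_of_mem_extremalWord ((hs₁.trans (List.drop_sublist _ _)).subset hx)
      omega
    have := length_le_of_sublist_extremalWord_of_pairwise_lt
      (hs₂.trans (List.take_sublist _ _)) (List.pairwise_cons.mp hinc).2
    simpa using this

theorem le_add_one_of_decCycSub_extremalWord {m : ℕ}
    (h : DecCycSub (1 :: extremalWord K L) m) : m ≤ L + 1 := by
  obtain ⟨r, s, hs, rfl, hdec⟩ := h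
  obtain ⟨u, hu, hrot⟩ := List.exists_rotate_cons_eq 1 (extremalWord K L) r
  rw [hrot] at hs
  rcases hs.sublist_or_eq_append_cons with hs | ⟨s₁, s₂, rfl, hs₁, hs₂⟩
  · rw [← List.rotate_eq_drop_append_take hu] at hs
    exact length_le_of_sublist_rotate_extremalWord_of_pairwise_gt u hs hdec
  · obtain ⟨hdec₁, hdec₂, -⟩ := List.pairwise_append.mp hdec
    obtain rfl : s₂ = [] := List.eq_nil_iff_forall_not_mem.mpr fun y hy => by
      have := (List.pairwise_cons.mp hdec₂).1 y hy
      have := one_lt_of_mem_extremalWord ((hs₂.trans (List.take_sublist _ _)).subset hy)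
      omega
    have := length_le_of_sublist_extremalWord_of_pairwise_gt
      (hs₁.trans (List.drop_sublist _ _)) hdec₁
    simpa using this

end

theorem eq_extremalWord {K L : ℕ} {a : List ℕ} (ha : a.length = K * L)
    (hform : ∀ i ∈ Finset.Icc 1 L, ∀ j ∈ Finset.Icc 1 K,
      a.getD ((j - 1) * L + i - 1) 0 = (L - i) * K + j + 1) :
    a = extremalWord K L := by
  apply List.ext_getElem (by simp [extremalWord, ha])
  intro p hp _
  have hpKL : p < K * L := ha ▸ hp
  have hL : 0 < L := Nat.pos_of_ne_zero (by rintro rfl; simp at hpKL)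
  have hblock : p / L < K := Nat.div_lt_of_lt_mul (by rwa [Nat.mul_comm])
  have hlevel : p % L < L := Nat.mod_lt p hL
  have hp_form := hform (p % L + 1) (by simp; omega) (p / L + 1) (by simp; omega)
  have hidx : (p / L + 1 - 1) * L + (p % L + 1) - 1 = p := by
    have := Nat.div_add_mod' p L
    simp only [Nat.add_sub_cancel]
    omega
  rw [hidx, List.getD_eq_getElem _ _ hp, show L - (p % L + 1) = L - 1 - p % L by omega] at hp_form
  simp only [extremalWord, List.getElem_map, List.getElem_range, extremalEntry, hp_form,
    Nat.mod_eq_of_lt hblock]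
  omega

theorem extremal_structure_one_general (k ℓ : ℕ) (hk : 2 ≤ k) (hl : 2 ≤ ℓ) (a : List ℕ)
    (ha : a.length = (k-1)*(ℓ-1))
    (hform : ∀ i ∈ Finset.Icc 1 (ℓ-1), ∀ j ∈ Finset.Icc 1 (k-1),
      a.getD ((j-1)*(ℓ-1)+i-1) 0 = (ℓ-1-i)*(k-1)+j+1) :
    ¬ IncCycSub (1 :: a) (k+1) ∧ ¬ DecCycSub (1 :: a) (ℓ+1) := by
  obtain rfl := eq_extremalWord ha hform
  exact ⟨fun h => by have := le_add_one_of_incCycSub_extremalWord h; omega,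
    fun h => by have := le_add_one_of_decCycSub_extremalWord h; omega⟩

theorem extremal_structure_one (k ℓ : ℕ) (hk : 2 ≤ k) (hl : 2 ≤ ℓ) (a : List ℕ)
    (ha : a.length = (k-1)*(ℓ-1))
    (hperm : (1 :: a).Perm (List.range' 1 ((k-1)*(ℓ-1)+1)))
    (hform : ∀ i ∈ Finset.Icc 1 (ℓ-1), ∀ j ∈ Finset.Icc 1 (k-1),
      a.getD ((j-1)*(ℓ-1)+i-1) 0 = (ℓ-1-i)*(k-1)+j+1) :
    ¬ IncCycSub (1 :: a) (k+1) ∧ ¬ DecCycSub (1 :: a) (ℓ+1) :=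
  extremal_structure_one_general k ℓ hk hl a ha hform
end

section
/- For k,ℓ ≥ 2, the cyclic permutation π = (1, a_1, ..., a_{(k-1)(ℓ-1)}) of {1,...,(k-1)(ℓ-1)+1}, where a_{(i-1)(k-1)+j} = (j-1)(ℓ-1)+(ℓ-i)+1 for all i ∈ [ℓ-1], j ∈ [k-1], has no increasing cyclic sub-permutation of length k+1 and no decreasing cyclic sub-permutation of length ℓ+1. -/
namespace List

variable {α : Type*}

theorem length_le_of_pairwise_lt {f : α → ℕ} {l : List α} {N : ℕ}
    (hl : l.Pairwise (f · < f ·)) (hN : ∀ x ∈ l, f x < N) : l.length ≤ N := by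
  have hnodup : (l.map f).Nodup := (pairwise_map.2 hl).nodup
  calc l.length = (l.map f).toFinset.card := by rw [toFinset_card_of_nodup hnodup, length_map]
    _ ≤ (Finset.range N).card := Finset.card_le_card fun y hy => by
        obtain ⟨x, hx, rfl⟩ := mem_map.1 (mem_toFinset.1 hy)
        exact Finset.mem_range.2 (hN x hx)
    _ = N := Finset.card_range N

theorem length_add_length_le_of_pairwise_lt {f : α → ℕ} {l₁ l₂ : List α} {N : ℕ}
    (h₁ : l₁.Pairwise (f · < f ·)) (h₂ : l₂.Pairwise (f · < f ·))
    (h₁₂ : ∀ x ∈ l₁, ∀ y ∈ l₂, f x ≤ f y) (hN : ∀ x ∈ l₁ ++ l₂, f x < N) :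
    l₁.length + l₂.length ≤ N + 1 := by
  have hchain : (l₁.map f ++ l₂.map (f · + 1)).Pairwise (· < ·) := by
    refine pairwise_append.2 ⟨pairwise_map.2 h₁, pairwise_map.2 (h₂.imp (by omega)), ?_⟩
    simp only [mem_map]
    rintro _ ⟨x, hx, rfl⟩ _ ⟨y, hy, rfl⟩
    exact Nat.lt_succ_of_le (h₁₂ x hx y hy)
  have hbound : ∀ y ∈ l₁.map f ++ l₂.map (f · + 1), y < N + 1 := by
    simp only [mem_append, mem_map]
    rintro _ (⟨x, hx, rfl⟩ | ⟨x, hx, rfl⟩)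
    · exact Nat.lt_succ_of_lt (hN x (mem_append_left _ hx))
    · exact Nat.succ_lt_succ (hN x (mem_append_right _ hx))
  simpa using length_le_of_pairwise_lt (f := id) hchain hbound

theorem exists_append_eq_rotate_cons (x : α) (a : List α) (r : ℕ) :
    ∃ u v, a = u ++ v ∧ (x :: a).rotate r = v ++ x :: u := by
  rw [rotate_eq_drop_append_take_mod]
  rcases r % (x :: a).length with _ | t
  · exact ⟨a, [], by simp, by simp⟩
  · exact ⟨a.take t, a.drop t, (take_append_drop t a).symm, by simp⟩

theorem exists_of_sublist_rotate_cons {x : α} {a s : List α} {r : ℕ}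
    (h : s <+ (x :: a).rotate r) :
    ∃ u v s₁ s₂, a = u ++ v ∧ s₁ <+ v ∧ s₂ <+ u ∧ (s = s₁ ++ s₂ ∨ s = s₁ ++ x :: s₂) := by
  obtain ⟨u, v, rfl, hrot⟩ := exists_append_eq_rotate_cons x a r
  rw [hrot] at h
  obtain ⟨s₁, s₂', rfl, h₁, h₂'⟩ := sublist_append_iff.1 h
  rcases sublist_cons_iff.1 h₂' with h₂ | ⟨s₂, rfl, h₂⟩
  · exact ⟨u, v, s₁, s₂', rfl, h₁, h₂, Or.inl rfl⟩
  · exact ⟨u, v, s₁, s₂, rfl, h₁, h₂, Or.inr rfl⟩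

end List

theorem Nat.strictMono_toLex_div_mod (d : ℕ) : StrictMono fun n => toLex (n / d, n % d) := by
  intro m n h
  rw [Prod.Lex.toLex_lt_toLex]
  rcases (Nat.div_le_div_right (c := d) h.le).lt_or_eq with hq | hq
  · exact Or.inl hq
  · refine Or.inr ⟨hq, ?_⟩
    have hm := Nat.div_add_mod m d
    have hn := Nat.div_add_mod n d
    rw [hq] at hm
    omega

namespace ExtremalCycle

def cell (K L p : ℕ) : ℕ := p % K * L + (L - p / K) + 1

def grid (K L : ℕ) : List ℕ := (List.range (K * L)).map (cell K L)

def row (L x : ℕ) : ℕ := L - 1 - (x - 2) % L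

def col (L x : ℕ) : ℕ := (x - 2) / L

def key (L x : ℕ) : ℕ ×ₗ ℕ := toLex (row L x, col L x)

variable {K L : ℕ}

theorem sub_two_eq {i j : ℕ} (hi : i < L) : j * L + (L - i) + 1 - 2 = (L - 1 - i) + j * L := by
  omega

theorem row_eq {i j : ℕ} (hi : i < L) : row L (j * L + (L - i) + 1) = i := by
  rw [row, sub_two_eq hi, Nat.add_mul_mod_self_right, Nat.mod_eq_of_lt (by omega)]
  omega

theorem col_eq {i j : ℕ} (hi : i < L) : col L (j * L + (L - i) + 1) = j := by
  rw [col, sub_two_eq hi, Nat.add_mul_div_right _ _ (by omega), Nat.div_eq_of_lt (by omega),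
    zero_add]

theorem div_lt_of_mem_range {p : ℕ} (hp : p ∈ List.range (K * L)) : p / K < L :=
  Nat.div_lt_of_lt_mul (List.mem_range.1 hp)

theorem two_le_of_mem_grid {x : ℕ} (hx : x ∈ grid K L) : 2 ≤ x := by
  obtain ⟨p, hp, rfl⟩ := List.mem_map.1 hx
  have := div_lt_of_mem_range hp
  unfold cell
  omega

theorem row_lt_of_mem_grid {x : ℕ} (hx : x ∈ grid K L) : row L x < L := by
  obtain ⟨p, hp, rfl⟩ := List.mem_map.1 hx
  rw [cell, row_eq (div_lt_of_mem_range hp)]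
  exact div_lt_of_mem_range hp

theorem col_lt_of_mem_grid {x : ℕ} (hx : x ∈ grid K L) : col L x < K := by
  obtain ⟨p, hp, rfl⟩ := List.mem_map.1 hx
  rw [cell, col_eq (div_lt_of_mem_range hp)]
  exact Nat.mod_lt _ (Nat.pos_of_ne_zero fun hK => by simp [hK] at hp)

theorem pairwise_key_grid : (grid K L).Pairwise (key L · < key L ·) := by
  refine List.pairwise_map.2 (List.pairwise_lt_range.imp_of_mem fun hp hq hpq => ?_)
  unfold key cell
  rw [row_eq (div_lt_of_mem_range hp), col_eq (div_lt_of_mem_range hp),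
    row_eq (div_lt_of_mem_range hq), col_eq (div_lt_of_mem_range hq)]
  exact Nat.strictMono_toLex_div_mod K hpq

theorem col_mono : Monotone (col L) := fun _ _ h =>
  Nat.div_le_div_right (Nat.sub_le_sub_right h 2)

theorem col_lt_col_of_lt_of_key_lt (hL : 0 < L) {x y : ℕ} (hx : 2 ≤ x) (h : x < y)
    (hkey : key L x < key L y) : col L x < col L y := by
  have hval := Nat.strictMono_toLex_div_mod L (Nat.sub_lt_sub_right hx h)
  have hxL := Nat.mod_lt (x - 2) hL
  have hyL := Nat.mod_lt (y - 2) hL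
  rw [key, key, Prod.Lex.toLex_lt_toLex] at hkey
  rw [Prod.Lex.toLex_lt_toLex] at hval
  simp only [row, col] at hkey ⊢
  omega

theorem row_lt_row_of_gt_of_key_lt {x y : ℕ} (h : y < x) (hkey : key L x < key L y) :
    row L x < row L y := by
  have := col_mono (L := L) h.le
  rw [key, key, Prod.Lex.toLex_lt_toLex] at hkey
  omega

theorem row_le_row_of_key_lt {x y : ℕ} (hkey : key L x < key L y) : row L x ≤ row L y := by
  rw [key, key, Prod.Lex.toLex_lt_toLex] at hkey
  omega

theorem pairwise_col_lt (hL : 0 < L) {s : List ℕ} (hs : s.Sublist (grid K L))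
    (hinc : s.Pairwise (· < ·)) : s.Pairwise (col L · < col L ·) :=
  (hinc.and (pairwise_key_grid.sublist hs)).imp_of_mem fun hx _ h =>
    col_lt_col_of_lt_of_key_lt hL (two_le_of_mem_grid (hs.subset hx)) h.1 h.2

theorem pairwise_row_lt {s : List ℕ} (hs : s.Sublist (grid K L))
    (hdec : s.Pairwise (· > ·)) : s.Pairwise (row L · < row L ·) :=
  (hdec.and (pairwise_key_grid.sublist hs)).imp fun h => row_lt_row_of_gt_of_key_lt h.1 h.2

theorem not_incCycSub_grid (hL : 0 < L) : ¬ IncCycSub (1 :: grid K L) (K + 2) := by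
  rintro ⟨r, s, hs, hlen, hinc⟩
  obtain ⟨u, v, s₁, s₂, hgrid, h₁, h₂, rfl | rfl⟩ := List.exists_of_sublist_rotate_cons hs
  all_goals
    have hv : s₁.Sublist (grid K L) := h₁.trans (hgrid ▸ List.sublist_append_right u v)
    have hu : s₂.Sublist (grid K L) := h₂.trans (hgrid ▸ List.sublist_append_left u v)
    obtain ⟨hinc₁, hinc₂, hcross⟩ := List.pairwise_append.1 hinc
  · have := List.length_add_length_le_of_pairwise_lt (pairwise_col_lt hL hv hinc₁)
      (pairwise_col_lt hL hu hinc₂) (fun x hx y hy => col_mono (hcross x hx y hy).le)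
      (fun x hx => col_lt_of_mem_grid ((List.append_subset.2 ⟨hv.subset, hu.subset⟩) hx))
    simp only [List.length_append] at hlen
    omega
  · have hs₁ : s₁ = [] := List.eq_nil_iff_forall_not_mem.2 fun x hx => by
      have := two_le_of_mem_grid (hv.subset hx)
      have := hcross x hx 1 List.mem_cons_self
      omega
    have := List.length_le_of_pairwise_lt (pairwise_col_lt hL hu (List.pairwise_cons.1 hinc₂).2)
      fun x hx => col_lt_of_mem_grid (hu.subset hx)
    simp only [hs₁, List.length_append, List.length_cons, List.length_nil] at hlen
    omega

theorem not_decCycSub_grid : ¬ DecCycSub (1 :: grid K L) (L + 2) := by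
  rintro ⟨r, s, hs, hlen, hdec⟩
  obtain ⟨u, v, s₁, s₂, hgrid, h₁, h₂, rfl | rfl⟩ := List.exists_of_sublist_rotate_cons hs
  all_goals
    have hv : s₁.Sublist (grid K L) := h₁.trans (hgrid ▸ List.sublist_append_right u v)
    have hu : s₂.Sublist (grid K L) := h₂.trans (hgrid ▸ List.sublist_append_left u v)
    obtain ⟨hdec₁, hdec₂, hcross⟩ := List.pairwise_append.1 hdec
  · have hkey := (List.pairwise_append.1 (hgrid ▸ pairwise_key_grid (K := K) (L := L))).2.2
    have := List.length_add_length_le_of_pairwise_lt (pairwise_row_lt hu hdec₂)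
      (pairwise_row_lt hv hdec₁)
      (fun x hx y hy => row_le_row_of_key_lt (hkey x (h₂.subset hx) y (h₁.subset hy)))
      (fun x hx => row_lt_of_mem_grid ((List.append_subset.2 ⟨hu.subset, hv.subset⟩) hx))
    simp only [List.length_append] at hlen
    omega
  · have hs₂ : s₂ = [] := List.eq_nil_iff_forall_not_mem.2 fun y hy => by
      have := two_le_of_mem_grid (hu.subset hy)
      have := (List.pairwise_cons.1 hdec₂).1 y hy
      omega
    have := List.length_le_of_pairwise_lt (pairwise_row_lt hv hdec₁)
      fun x hx => row_lt_of_mem_grid (hv.subset hx)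
    simp only [hs₂, List.length_append, List.length_cons, List.length_nil] at hlen
    omega

theorem eq_grid_of_getD {a : List ℕ} (ha : a.length = K * L)
    (hform : ∀ i ∈ Finset.Icc 1 L, ∀ j ∈ Finset.Icc 1 K,
      a.getD ((i - 1) * K + j - 1) 0 = (j - 1) * L + (L + 1 - i) + 1) :
    a = grid K L := by
  refine List.ext_getElem (by simp [grid, ha]) fun p hpa _ => ?_
  have hp : p < K * L := ha ▸ hpa
  have hK : 0 < K := Nat.pos_of_ne_zero fun hK => by simp [hK] at hp
  have hpL : p / K < L := Nat.div_lt_of_lt_mul hp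
  have h := hform (p / K + 1) (Finset.mem_Icc.2 ⟨Nat.le_add_left 1 _, hpL⟩) (p % K + 1)
    (Finset.mem_Icc.2 ⟨by omega, Nat.mod_lt p hK⟩)
  have hidx : (p / K + 1 - 1) * K + (p % K + 1) - 1 = p := by
    rw [Nat.add_sub_cancel, ← Nat.add_assoc, Nat.add_sub_cancel, Nat.div_add_mod']
  rw [hidx, List.getD_eq_getElem _ _ hpa] at h
  rw [h, Nat.add_sub_cancel, Nat.add_sub_add_right]
  simp only [grid, List.getElem_map, List.getElem_range, cell]

end ExtremalCycle

open ExtremalCycle in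
theorem extremal_structure_two_general (k ℓ : ℕ) (hk : 2 ≤ k) (hl : 2 ≤ ℓ) (a : List ℕ)
    (ha : a.length = (k-1)*(ℓ-1))
    (hform : ∀ i ∈ Finset.Icc 1 (ℓ-1), ∀ j ∈ Finset.Icc 1 (k-1),
      a.getD ((i-1)*(k-1)+j-1) 0 = (j-1)*(ℓ-1)+(ℓ-i)+1) :
    ¬ IncCycSub (1 :: a) (k+1) ∧ ¬ DecCycSub (1 :: a) (ℓ+1) := by
  obtain ⟨K, rfl⟩ : ∃ K, k = K + 1 := ⟨k - 1, by omega⟩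
  obtain ⟨L, rfl⟩ : ∃ L, ℓ = L + 1 := ⟨ℓ - 1, by omega⟩
  simp only [Nat.add_sub_cancel] at ha hform
  obtain rfl := eq_grid_of_getD ha hform
  exact ⟨not_incCycSub_grid (by omega), not_decCycSub_grid⟩

theorem extremal_structure_two (k ℓ : ℕ) (hk : 2 ≤ k) (hl : 2 ≤ ℓ) (a : List ℕ)
    (ha : a.length = (k-1)*(ℓ-1))
    (hperm : (1 :: a).Perm (List.range' 1 ((k-1)*(ℓ-1)+1)))
    (hform : ∀ i ∈ Finset.Icc 1 (ℓ-1), ∀ j ∈ Finset.Icc 1 (k-1),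
      a.getD ((i-1)*(k-1)+j-1) 0 = (j-1)*(ℓ-1)+(ℓ-i)+1) :
    ¬ IncCycSub (1 :: a) (k+1) ∧ ¬ DecCycSub (1 :: a) (ℓ+1) :=
  extremal_structure_two_general k ℓ hk hl a ha hform
end

section
/- For k,ℓ ≥ 1, the smallest n such that every cyclic permutation of length n has an increasing cyclic sub-permutation of length k+1 or a decreasing cyclic sub-permutation of length ℓ+1 equals (k-1)(ℓ-1)+2. -/
/-!
Upper bound: rotate the cycle so that its maximum comes first. By Erdős–Szekeres the remaining
`(k-1)(ℓ-1)+1` entries contain an increasing sublist of length `k`, which the maximum closes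
cyclically, or a decreasing sublist of length `ℓ`, which the maximum in front extends.

Lower bound: with `K = k-1`, `L = ℓ-1` and `N = KL+1`, place `iL mod N` at position `i`.
Along an increasing cyclic sublist the potential `i - K⌊iL/N⌋` of the positions strictly
increases, and along a decreasing one `⌊iL/N⌋` does, while within `N` consecutive positions these
potentials vary by at most `K` and `L`. Deleting the maximum of a cycle creates no new cyclic
sublists, which gives counterexamples of every smaller length.
-/

namespace List

section ErdosSzekeres

variable {α : Type*} [LinearOrder α]

noncomputable def longestIncUpTo (l : List α) (i : Fin l.length) : ℕ :=
  sSup {m | ∃ t, t <+ l.take (i + 1) ∧ t.Pairwise (· < ·) ∧ (∀ x ∈ t, x ≤ l[i]) ∧ t.length = m}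

variable {l : List α}

private lemma bddAbove_longestIncUpTo_set (i : Fin l.length) :
    BddAbove {m | ∃ t, t <+ l.take (i + 1) ∧ t.Pairwise (· < ·) ∧ (∀ x ∈ t, x ≤ l[i]) ∧
      t.length = m} :=
  ⟨l.length, by
    rintro _ ⟨t, ht, -, -, rfl⟩
    exact ht.length_le.trans (length_take_le' _ _)⟩

lemma le_longestIncUpTo {i : Fin l.length} {t : List α} (ht : t <+ l.take (i + 1))
    (hinc : t.Pairwise (· < ·)) (hle : ∀ x ∈ t, x ≤ l[i]) : t.length ≤ l.longestIncUpTo i :=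
  le_csSup (bddAbove_longestIncUpTo_set i) ⟨t, ht, hinc, hle, rfl⟩

lemma exists_eq_longestIncUpTo (i : Fin l.length) :
    ∃ t, t <+ l.take (i + 1) ∧ t.Pairwise (· < ·) ∧ (∀ x ∈ t, x ≤ l[i]) ∧
      t.length = l.longestIncUpTo i := by
  refine Nat.sSup_mem ?_ (bddAbove_longestIncUpTo_set i)
  exact ⟨0, [], nil_sublist _, Pairwise.nil, by simp, rfl⟩

lemma one_le_longestIncUpTo (i : Fin l.length) : 1 ≤ l.longestIncUpTo i :=
  le_longestIncUpTo (t := [l[i]])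
    (singleton_sublist.2 (mem_take_iff_getElem.2 ⟨i, by omega, rfl⟩))
    (pairwise_singleton _ _) (by simp)

lemma longestIncUpTo_lt_longestIncUpTo {i j : Fin l.length} (hij : i < j) (h : l[i] < l[j]) :
    l.longestIncUpTo i < l.longestIncUpTo j := by
  obtain ⟨t, ht, hinc, hle, hlen⟩ := exists_eq_longestIncUpTo i
  have hsub : t ++ [l[j]] <+ l.take (j + 1) := by
    rw [← take_concat_get' l j j.isLt]
    exact (ht.trans (take_sublist_take_left (by omega))).append (Sublist.refl _)
  have hlt : ∀ x ∈ t, x < l[j] := fun x hx => (hle x hx).trans_lt h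
  have := le_longestIncUpTo hsub
    (pairwise_append.2 ⟨hinc, pairwise_singleton _ _, by simpa using hlt⟩)
    (by simpa [or_imp, forall_and] using fun x hx => (hlt x hx).le)
  simp only [length_append, length_singleton, hlen] at this
  omega

lemma exists_sublist_of_lt_longestIncUpTo {r : ℕ} {i : Fin l.length}
    (h : r < l.longestIncUpTo i) :
    ∃ t, t <+ l ∧ t.length = r + 1 ∧ t.Pairwise (· < ·) := by
  obtain ⟨t, ht, hinc, -, hlen⟩ := exists_eq_longestIncUpTo i
  refine ⟨t.take (r + 1), (take_sublist _ _).trans (ht.trans (take_sublist _ _)), ?_,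
    hinc.sublist (take_sublist _ _)⟩
  rw [length_take]
  omega

/-- Seidenberg's argument: the pairs of longest increasing and decreasing lengths up to a
position are distinct at distinct positions. -/
theorem erdos_szekeres (hl : l.Nodup) {r s : ℕ} (h : r * s < l.length) :
    (∃ t, t <+ l ∧ t.length = r + 1 ∧ t.Pairwise (· < ·)) ∨
      ∃ t, t <+ l ∧ t.length = s + 1 ∧ t.Pairwise (· > ·) := by
  by_contra! hno
  let ld : List αᵒᵈ := l
  let label : Fin l.length → ℕ × ℕ := fun i => (l.longestIncUpTo i, ld.longestIncUpTo i)
  have hmaps : Set.MapsTo label (Finset.univ : Finset (Fin l.length))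
      (Finset.Icc 1 r ×ˢ Finset.Icc 1 s : Finset (ℕ × ℕ)) := by
    intro i _
    simp only [Finset.coe_Icc, Finset.coe_product, Set.mem_prod, Set.mem_Icc, label]
    refine ⟨⟨one_le_longestIncUpTo i, not_lt.1 fun hr => ?_⟩,
      one_le_longestIncUpTo (l := ld) i, not_lt.1 fun hs => ?_⟩
    · obtain ⟨t, ht, hlen, hinc⟩ := exists_sublist_of_lt_longestIncUpTo hr
      exact hno.1 t ht hlen hinc
    · obtain ⟨t, ht, hlen, hdec⟩ := exists_sublist_of_lt_longestIncUpTo (l := ld) hs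
      exact hno.2 t ht hlen hdec
  have hinj : Function.Injective label := by
    refine Function.Injective.of_lt_imp_ne fun i j hij heq => ?_
    have hne : l[i] ≠ l[j] := fun h => hij.ne (Fin.ext ((hl.getElem_inj_iff).1 h))
    rcases hne.lt_or_gt with hlt | hgt
    · exact (longestIncUpTo_lt_longestIncUpTo hij hlt).ne (congrArg Prod.fst heq)
    · exact (longestIncUpTo_lt_longestIncUpTo (l := ld) hij hgt).ne (congrArg Prod.snd heq)
  have := Finset.card_le_card_of_injOn label hmaps hinj.injOn
  simp only [Finset.card_univ, Fintype.card_fin, Finset.card_product, Nat.card_Icc,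
    add_tsub_cancel_right] at this
  omega

end ErdosSzekeres

variable {α : Type*}

lemma exists_rotate_sublist_rotate_cons (a : α) (l : List α) (r : ℕ) :
    ∃ r', l.rotate r <+ (a :: l).rotate r' := by
  rcases eq_or_ne l [] with rfl | hl
  · exact ⟨0, by simp⟩
  have hn : r % l.length ≤ l.length := (Nat.mod_lt _ (length_pos_iff.2 hl)).le
  refine ⟨r % l.length + 1, ?_⟩
  rw [← rotate_mod, rotate_cons_succ, rotate_eq_drop_append_take hn,
    rotate_eq_drop_append_take (by simpa using hn.trans (Nat.le_succ _)),
    drop_append_of_le_length hn, take_append_of_le_length hn]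
  exact (sublist_append_left _ _).append (Sublist.refl _)

lemma exists_rotate_sublist_rotate_insert (u v : List α) (a : α) (r : ℕ) :
    ∃ r', (u ++ v).rotate r <+ (u ++ a :: v).rotate r' := by
  obtain ⟨m, hm⟩ := (isRotated_append (l := u) (l' := v)).symm
  obtain ⟨r', hr'⟩ := exists_rotate_sublist_rotate_cons a (v ++ u) (m + r)
  refine ⟨u.length + r', ?_⟩
  rwa [← rotate_rotate, rotate_append_length_eq, ← hm, rotate_rotate]

lemma rotate_map_range_of_periodic {f : ℕ → α} {N : ℕ} (hf : Function.Periodic f N) (r : ℕ) :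
    ((range N).map f).rotate r = (range' r N).map f := by
  induction r with
  | zero => rw [rotate_zero, range_eq_range']
  | succ r ih =>
    rw [← rotate_rotate, ih]
    rcases N with _ | N
    · simp
    rw [range'_succ, map_cons, rotate_cons_succ, rotate_zero, range'_concat, map_append,
      map_singleton, Nat.one_mul, show r + 1 + N = r + (N + 1) by omega, hf]

lemma length_le_of_pairwise_of_mem_Icc {g : α → ℤ} {l : List α}
    (hl : l.Pairwise fun x y => g x < g y) {lo hi : ℤ} (hmem : ∀ x ∈ l, g x ∈ Set.Icc lo hi) :
    l.length ≤ (hi + 1 - lo).toNat := by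
  classical
  have hnd : (l.map g).Nodup := (pairwise_map.2 hl).nodup
  rw [← Int.card_Icc, ← length_map (f := g), ← toFinset_card_of_nodup hnd]
  exact Finset.card_le_card fun y hy => by
    obtain ⟨x, hx, rfl⟩ := mem_map.1 (mem_toFinset.1 hy)
    simpa using hmem x hx

theorem length_le_of_sublist_rotate_map_range {f : ℕ → α} {N : ℕ} (hf : Function.Periodic f N)
    {R : α → α → Prop} {g : ℕ → ℤ} {B : ℕ} (hstep : ∀ a b, a < b → R (f a) (f b) → g a < g b)
    (hwin : ∀ a b, b < a + N → g b ≤ g a + B) {r : ℕ} {s : List α}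
    (hs : s <+ ((range N).map f).rotate r) (hR : s.Pairwise R) : s.length ≤ B + 1 := by
  rw [rotate_map_range_of_periodic hf, sublist_map_iff] at hs
  obtain ⟨_ | ⟨a, is⟩, his, rfl⟩ := hs
  · simp
  have hsorted : (a :: is).Pairwise (· < ·) := (pairwise_lt_range' (s := r) (n := N)).sublist his
  have hrange : ∀ x ∈ a :: is, r ≤ x ∧ x < r + N := fun x hx => mem_range'_1.1 (his.subset hx)
  have hg : (a :: is).Pairwise fun x y => g x < g y :=
    (hsorted.and (pairwise_map.1 hR)).imp fun h => hstep _ _ h.1 h.2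
  have hmem : ∀ x ∈ a :: is, g x ∈ Set.Icc (g a) (g a + B) := by
    intro x hx
    rcases mem_cons.1 hx with rfl | hx
    · simp
    refine ⟨((pairwise_cons.1 hg).1 x hx).le, hwin a x ?_⟩
    have := hrange a mem_cons_self
    have := hrange x (mem_cons_of_mem _ hx)
    omega
  have := length_le_of_pairwise_of_mem_Icc hg hmem
  rw [length_map]
  omega

end List

lemma Nat.div_lt_div_of_mod_lt {N x y : ℕ} (hxy : x ≤ y) (h : y % N < x % N) : x / N < y / N := by
  have hx := Nat.div_add_mod x N
  have hy := Nat.div_add_mod y N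
  by_contra! hle
  have := Nat.mul_le_mul_left N hle
  omega

section FloorQuotients

variable {K L : ℕ}

lemma sub_mul_div_lt_of_mod_lt {a b : ℕ} (hab : a ≤ b)
    (h : a * L % (K * L + 1) < b * L % (K * L + 1)) :
    (a : ℤ) - K * (a * L / (K * L + 1) : ℕ) < b - K * (b * L / (K * L + 1) : ℕ) := by
  have ha := Nat.div_add_mod (a * L) (K * L + 1)
  have hb := Nat.div_add_mod (b * L) (K * L + 1)
  have hpq := Nat.div_le_div_right (c := K * L + 1) (Nat.mul_le_mul_right L hab)
  set p := a * L / (K * L + 1)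
  set q := b * L / (K * L + 1)
  zify at ha hb h hpq
  by_contra! hle
  nlinarith [mul_le_mul_of_nonneg_right hle (Int.natCast_nonneg L)]

lemma sub_mul_div_le_add {a b : ℕ} (hb : b ≤ a + K * L) :
    (b : ℤ) - K * (b * L / (K * L + 1) : ℕ) ≤ a - K * (a * L / (K * L + 1) : ℕ) + K := by
  have ha := Nat.div_add_mod (a * L) (K * L + 1)
  have hb' := Nat.div_add_mod (b * L) (K * L + 1)
  have hwa := Nat.zero_le (a * L % (K * L + 1))
  have hwb := Nat.mod_lt (b * L) (by omega : 0 < K * L + 1)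
  set p := a * L / (K * L + 1)
  set q := b * L / (K * L + 1)
  zify at ha hb' hwa hwb hb
  by_contra! hlt
  have hLq : (L : ℤ) ≤ q - p := by
    nlinarith [mul_le_mul_of_nonneg_right (Int.add_one_le_iff.2 hlt) (Int.natCast_nonneg L)]
  nlinarith [mul_le_mul_of_nonneg_left hLq (Int.natCast_nonneg K)]

lemma mul_div_le_add {a b : ℕ} (hb : b ≤ a + K * L) :
    b * L / (K * L + 1) ≤ a * L / (K * L + 1) + L := by
  rw [Nat.le_iff_lt_add_one, Nat.div_lt_iff_lt_mul (by omega)]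
  have := Nat.lt_div_mul_add (a := a * L) (b := K * L + 1) (by omega)
  have := Nat.mul_le_mul_right L hb
  nlinarith

end FloorQuotients

lemma IncCycSub.append_cons {u v : List ℕ} {m : ℕ} (a : ℕ) (h : IncCycSub (u ++ v) m) :
    IncCycSub (u ++ a :: v) m := by
  obtain ⟨r, s, hs, hlen, hinc⟩ := h
  obtain ⟨r', hr'⟩ := List.exists_rotate_sublist_rotate_insert u v a r
  exact ⟨r', s, hs.trans hr', hlen, hinc⟩

lemma DecCycSub.append_cons {u v : List ℕ} {m : ℕ} (a : ℕ) (h : DecCycSub (u ++ v) m) :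
    DecCycSub (u ++ a :: v) m := by
  obtain ⟨r, s, hs, hlen, hdec⟩ := h
  obtain ⟨r', hr'⟩ := List.exists_rotate_sublist_rotate_insert u v a r
  exact ⟨r', s, hs.trans hr', hlen, hdec⟩

open List

theorem incCycSub_or_decCycSub_of_mul_add_one_lt_length {c : List ℕ} (hc : c.Nodup) {r s : ℕ}
    (h : r * s + 1 < c.length) : IncCycSub c (r + 2) ∨ DecCycSub c (s + 2) := by
  obtain ⟨M, hM, hmax⟩ := c.toFinset.exists_max_image id
    (toFinset_nonempty_iff _ |>.2 (ne_nil_of_length_pos (by omega)))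
  simp only [mem_toFinset, id] at hM hmax
  obtain ⟨u, v, rfl⟩ := append_of_mem hM
  have hrot : (u ++ M :: v).rotate u.length = M :: (v ++ u) := rotate_append_length_eq _ _
  have hnd : (M :: (v ++ u)).Nodup := hrot ▸ nodup_rotate.2 hc
  have hlt : ∀ x ∈ v ++ u, x < M := fun x hx =>
    (hmax x (by simp only [mem_append, mem_cons] at hx ⊢; tauto)).lt_of_ne
      fun hxM => (nodup_cons.1 hnd).1 (hxM ▸ hx)
  have hlen : r * s < (v ++ u).length := by
    simp only [length_append, length_cons] at h ⊢
    omega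
  rcases erdos_szekeres (nodup_cons.1 hnd).2 hlen with ⟨t, ht, htlen, hinc⟩ | ⟨t, ht, htlen, hdec⟩
  · refine .inl ⟨u.length + 1, t ++ [M], ?_, by simp [htlen], ?_⟩
    · rw [← rotate_rotate, hrot, rotate_cons_succ, rotate_zero]
      exact ht.append (Sublist.refl _)
    · exact pairwise_append.2 ⟨hinc, pairwise_singleton _ _,
        fun x hx y hy => (mem_singleton.1 hy) ▸ hlt x (ht.subset hx)⟩
  · refine .inr ⟨u.length, M :: t, hrot ▸ ht.cons_cons M, by simp [htlen], ?_⟩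
    exact pairwise_cons.2 ⟨fun x hx => hlt x (ht.subset hx), hdec⟩

lemma incCycSub_or_decCycSub_succ {m m' n : ℕ}
    (h : ∀ c : List ℕ, c ~ range' 1 n → IncCycSub c m ∨ DecCycSub c m') {c : List ℕ}
    (hc : c ~ range' 1 (n + 1)) : IncCycSub c m ∨ DecCycSub c m' := by
  obtain ⟨u, v, rfl⟩ := append_of_mem (hc.mem_iff.2 (mem_range'_1.2 ⟨by omega, by omega⟩ :
    n + 1 ∈ range' 1 (n + 1)))
  have huv : u ++ v ~ range' 1 n := by
    have := perm_middle.symm.trans (hc.trans (range'_concat (s := 1) ▸ perm_append_singleton _ _))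
    simpa [Nat.add_comm] using this
  exact (h _ huv).imp (IncCycSub.append_cons _) (DecCycSub.append_cons _)

def modCycle (K L : ℕ) : List ℕ :=
  (range (K * L + 1)).map fun i => i * L % (K * L + 1) + 1

lemma modCycle_perm (K L : ℕ) : modCycle K L ~ range' 1 (K * L + 1) := by
  have hcop : Nat.gcd (K * L + 1) L = 1 := by
    rw [Nat.gcd_comm, mul_comm]
    exact (Nat.coprime_mul_left_add_right L 1 K).2 (Nat.coprime_one_right L)
  have hnd : (modCycle K L).Nodup := by
    refine nodup_range.map_on fun i hi j hj hij => ?_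
    have := Nat.ModEq.cancel_right_of_coprime hcop (Nat.succ_injective hij)
    rwa [Nat.ModEq, Nat.mod_eq_of_lt (mem_range.1 hi), Nat.mod_eq_of_lt (mem_range.1 hj)] at this
  have hsub : modCycle K L ⊆ range' 1 (K * L + 1) := by
    intro x hx
    obtain ⟨i, -, rfl⟩ := mem_map.1 hx
    exact mem_range'_1.2 ⟨by omega, by have := Nat.mod_lt (i * L) (by omega : 0 < K * L + 1); omega⟩
  exact (hnd.subperm hsub).perm_of_length_le (by simp [modCycle])

lemma modCycle_periodic (K L : ℕ) :
    Function.Periodic (fun i => i * L % (K * L + 1) + 1) (K * L + 1) := fun i => by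
  dsimp only
  rw [add_mul, Nat.add_mul_mod_self_left]

theorem not_incCycSub_modCycle (K L : ℕ) : ¬ IncCycSub (modCycle K L) (K + 2) := by
  rintro ⟨r, s, hs, hlen, hinc⟩
  have hstep (a b : ℕ) (hab : a < b) (h : a * L % (K * L + 1) + 1 < b * L % (K * L + 1) + 1) :
      (a : ℤ) - K * (a * L / (K * L + 1) : ℕ) < b - K * (b * L / (K * L + 1) : ℕ) :=
    sub_mul_div_lt_of_mod_lt hab.le (by omega)
  have hwin (a b : ℕ) (hb : b < a + (K * L + 1)) :
      (b : ℤ) - K * (b * L / (K * L + 1) : ℕ) ≤ a - K * (a * L / (K * L + 1) : ℕ) + K :=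
    sub_mul_div_le_add (by omega)
  have := length_le_of_sublist_rotate_map_range (modCycle_periodic K L) hstep hwin hs hinc
  omega

theorem not_decCycSub_modCycle (K L : ℕ) : ¬ DecCycSub (modCycle K L) (L + 2) := by
  rintro ⟨r, s, hs, hlen, hdec⟩
  have hstep (a b : ℕ) (hab : a < b) (h : a * L % (K * L + 1) + 1 > b * L % (K * L + 1) + 1) :
      ((a * L / (K * L + 1) : ℕ) : ℤ) < (b * L / (K * L + 1) : ℕ) := by
    exact_mod_cast Nat.div_lt_div_of_mod_lt (Nat.mul_le_mul_right L hab.le) (by omega)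
  have hwin (a b : ℕ) (hb : b < a + (K * L + 1)) :
      ((b * L / (K * L + 1) : ℕ) : ℤ) ≤ (a * L / (K * L + 1) : ℕ) + L := by
    exact_mod_cast mul_div_le_add (by omega)
  have := length_le_of_sublist_rotate_map_range (modCycle_periodic K L) hstep hwin hs hdec
  omega

theorem alpha_eq (k ℓ : ℕ) (hk : 1 ≤ k) (hl : 1 ≤ ℓ) :
    IsLeast {n : ℕ | ∀ c : List ℕ, c.Perm (List.range' 1 n) →
      IncCycSub c (k+1) ∨ DecCycSub c (ℓ+1)} ((k-1)*(ℓ-1)+2) := by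
  obtain ⟨K, rfl⟩ : ∃ K, k = K + 1 := ⟨k - 1, by omega⟩
  obtain ⟨L, rfl⟩ : ∃ L, ℓ = L + 1 := ⟨ℓ - 1, by omega⟩
  simp only [Nat.add_sub_cancel]
  refine ⟨fun c hc => incCycSub_or_decCycSub_of_mul_add_one_lt_length
    (hc.nodup_iff.2 nodup_range') (by simp [hc.length_eq]), fun n hn => ?_⟩
  by_contra! hlt
  have hmono : Monotone fun n => ∀ c : List ℕ, c ~ range' 1 n →
      IncCycSub c (K + 1 + 1) ∨ DecCycSub c (L + 1 + 1) :=
    monotone_nat_of_le_succ fun _ => incCycSub_or_decCycSub_succ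
  rcases hmono (show n ≤ K * L + 1 by omega) hn _ (modCycle_perm K L) with h | h
  · exact not_incCycSub_modCycle K L h
  · exact not_decCycSub_modCycle K L h
end

section
/- Let k,ℓ ≥ 2 and let the cyclic permutation π = (1, a_1, ..., a_{(k-1)(ℓ-1)+1}) of {1,...,(k-1)(ℓ-1)+2} be given. If the linear sequence [a_1, ..., a_{(k-1)(ℓ-1)+1}] has an increasing subsequence of length k, then π has an increasing cyclic sub-permutation of length k+1; if the sequence has a decreasing subsequence of length ℓ, then π has a decreasing cyclic sub-permutation of length ℓ+1. -/
namespace List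

theorem forall_mem_lt_of_cons_perm_range' {b : ℕ} {a : List ℕ} {n : ℕ}
    (h : (b :: a).Perm (range' b n)) : ∀ x ∈ a, b < x := by
  have hnodup : (b :: a).Nodup := h.nodup_iff.mpr (nodup_range' (h := Nat.one_pos))
  intro x hx
  have hbx : b ≤ x := (mem_range'_1.mp (h.subset (mem_cons_of_mem b hx))).1
  exact hbx.lt_of_ne fun hxb ↦ (nodup_cons.mp hnodup).1 (hxb ▸ hx)

end List

section

variable {b : ℕ} {a : List ℕ} {m : ℕ}

theorem incCycSub_cons_of_forall_lt (hb : ∀ x ∈ a, b < x)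
    (h : ∃ s : List ℕ, s.Sublist a ∧ s.length = m ∧ s.Pairwise (· < ·)) :
    IncCycSub (b :: a) (m + 1) := by
  obtain ⟨s, hsub, hlen, hsort⟩ := h
  refine ⟨0, b :: s, ?_, by simp [hlen], ?_⟩
  · simpa using hsub.cons_cons b
  · exact List.pairwise_cons.mpr ⟨fun x hx ↦ hb x (hsub.subset hx), hsort⟩

theorem decCycSub_cons_of_forall_lt (hb : ∀ x ∈ a, b < x)
    (h : ∃ s : List ℕ, s.Sublist a ∧ s.length = m ∧ s.Pairwise (· > ·)) :
    DecCycSub (b :: a) (m + 1) := by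
  obtain ⟨s, hsub, hlen, hsort⟩ := h
  refine ⟨1, s ++ [b], ?_, by simp [hlen], ?_⟩
  · simpa using hsub.append (List.Sublist.refl [b])
  · refine List.pairwise_append.mpr ⟨hsort, List.pairwise_singleton _ _, ?_⟩
    simpa using fun x hx ↦ hb x (hsub.subset hx)

end

theorem linear_to_cyclic_general (k ℓ : ℕ) (a : List ℕ)
    (hperm : (1 :: a).Perm (List.range' 1 ((k-1)*(ℓ-1)+2))) :
    ((∃ s : List ℕ, s.Sublist a ∧ s.length = k ∧ s.Pairwise (· < ·)) → IncCycSub (1 :: a) (k+1)) ∧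
    ((∃ s : List ℕ, s.Sublist a ∧ s.length = ℓ ∧ s.Pairwise (· > ·)) → DecCycSub (1 :: a) (ℓ+1)) := by
  have hmin := List.forall_mem_lt_of_cons_perm_range' hperm
  exact ⟨incCycSub_cons_of_forall_lt hmin, decCycSub_cons_of_forall_lt hmin⟩

theorem linear_to_cyclic (k ℓ : ℕ) (hk : 2 ≤ k) (hl : 2 ≤ ℓ) (a : List ℕ)
    (hperm : (1 :: a).Perm (List.range' 1 ((k-1)*(ℓ-1)+2))) :
    ((∃ s : List ℕ, s.Sublist a ∧ s.length = k ∧ s.Pairwise (· < ·)) → IncCycSub (1 :: a) (k+1)) ∧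
    ((∃ s : List ℕ, s.Sublist a ∧ s.length = ℓ ∧ s.Pairwise (· > ·)) → DecCycSub (1 :: a) (ℓ+1)) :=
  linear_to_cyclic_general k ℓ a hperm
end

section
/- Let a = [a_1,...,a_{kℓ}] be a permutation of {1,...,kℓ} with no increasing subsequence of length k+1 and no decreasing subsequence of length ℓ+1. Then the grid function γ_a : [kℓ] → [ℓ]×[k], defined by γ_a(t) = (i,j) where i is the length of the longest decreasing subsequence of a ending at a_t and j is the length of the longest increasing subsequence of a ending at a_t, is a bijection. -/
/-- Length of the longest decreasing subsequence of `a` ending at the `t`-th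
entry (1-based) of `a`. -/
noncomputable def gridI (a : List ℕ) (t : ℕ) : ℕ :=
  sSup {r | ∃ s : List ℕ, s.Sublist (a.take t) ∧ s.length = r ∧
    s.getLast? = a[t-1]? ∧ s.Pairwise (· > ·)}

/-- Length of the longest increasing subsequence of `a` ending at the `t`-th
entry (1-based) of `a`. -/
noncomputable def gridJ (a : List ℕ) (t : ℕ) : ℕ :=
  sSup {r | ∃ s : List ℕ, s.Sublist (a.take t) ∧ s.length = r ∧
    s.getLast? = a[t-1]? ∧ s.Pairwise (· < ·)}

/-!
If `s < t` then `a_s < a_t` or `a_s > a_t`; in the first case every increasing subsequence ending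
at `a_s` extends by `a_t`, so the second coordinate of `γ_a` strictly grows, and in the second case
the first one does. Hence `γ_a` is injective, and it is a bijection because `[kℓ]` and `[ℓ]×[k]`
have the same size.
-/

section EndingChains

variable {α : Type*} (r : α → α → Prop) (a : List α) (t : ℕ)

def endingChainLengths : Set ℕ :=
  {n | ∃ s : List α, s.Sublist (a.take t) ∧ s.length = n ∧ s.getLast? = a[t-1]? ∧ s.Pairwise r}

variable {r a t}

theorem one_mem_endingChainLengths (ht₀ : 0 < t) (ht : t ≤ a.length) :
    1 ∈ endingChainLengths r a t := by
  refine ⟨[a[t-1]], ?_, rfl, by simp [List.getElem?_eq_getElem (by omega : t - 1 < a.length)],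
    List.pairwise_singleton _ _⟩
  have : t - 1 < (a.take t).length := by simp; omega
  simpa using List.getElem_mem this

theorem bddAbove_endingChainLengths : BddAbove (endingChainLengths r a t) :=
  ⟨t, fun _ ⟨_, hs, hn, _⟩ => hn ▸ hs.length_le.trans (List.length_take_le t a)⟩

theorem le_of_mem_endingChainLengths {m n : ℕ}
    (hm : ¬ ∃ s : List α, s.Sublist a ∧ s.length = m + 1 ∧ s.Pairwise r)
    (hn : n ∈ endingChainLengths r a t) : n ≤ m := by
  obtain ⟨s, hs, rfl, -, hr⟩ := hn
  by_contra! hlt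
  exact hm ⟨s.take (m + 1), ((s.take_sublist _).trans hs).trans (a.take_sublist t),
    by simp; omega, hr.sublist (s.take_sublist _)⟩

theorem sSup_endingChainLengths_mem (ht₀ : 0 < t) (ht : t ≤ a.length) :
    sSup (endingChainLengths r a t) ∈ endingChainLengths r a t :=
  Nat.sSup_mem ⟨1, one_mem_endingChainLengths ht₀ ht⟩ bddAbove_endingChainLengths

theorem sSup_endingChainLengths_mem_Icc {m : ℕ}
    (hm : ¬ ∃ s : List α, s.Sublist a ∧ s.length = m + 1 ∧ s.Pairwise r)
    (ht₀ : 0 < t) (ht : t ≤ a.length) :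
    sSup (endingChainLengths r a t) ∈ Finset.Icc 1 m :=
  Finset.mem_Icc.2 ⟨le_csSup bddAbove_endingChainLengths (one_mem_endingChainLengths ht₀ ht),
    le_of_mem_endingChainLengths hm (sSup_endingChainLengths_mem ht₀ ht)⟩

theorem succ_mem_endingChainLengths [IsTrans α r] {s n : ℕ} (hst : s < t)
    (ht : t ≤ a.length) (hr : r a[s-1] a[t-1]) (hn : n ∈ endingChainLengths r a s) :
    n + 1 ∈ endingChainLengths r a t := by
  obtain ⟨w, hw, rfl, hlast, hwr⟩ := hn
  have htake : a.take t = a.take (t - 1) ++ [a[t-1]] := by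
    have := List.take_add_one (l := a) (i := t - 1)
    rwa [Nat.sub_add_cancel (by omega : 1 ≤ t), List.getElem?_eq_getElem (by omega),
      Option.toList_some] at this
  refine ⟨w ++ [a[t-1]], ?_, by simp,
    by simp [List.getElem?_eq_getElem (by omega : t - 1 < a.length)], ?_⟩
  · rw [htake]
    exact (hw.trans (List.take_sublist_take_left (by omega))).append (List.Sublist.refl _)
  · rw [← List.isChain_iff_pairwise, List.isChain_append]
    refine ⟨List.isChain_iff_pairwise.2 hwr, List.isChain_singleton _, ?_⟩
    rw [hlast, List.getElem?_eq_getElem (by omega : s - 1 < a.length)]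
    simpa using hr

theorem sSup_endingChainLengths_lt [IsTrans α r] {s : ℕ} (hs₀ : 0 < s) (hst : s < t)
    (ht : t ≤ a.length) (hr : r a[s-1] a[t-1]) :
    sSup (endingChainLengths r a s) < sSup (endingChainLengths r a t) :=
  Nat.lt_of_succ_le <| le_csSup bddAbove_endingChainLengths <|
    succ_mem_endingChainLengths hst ht hr (sSup_endingChainLengths_mem hs₀ (by omega))

end EndingChains

theorem gridI_eq_sSup (a : List ℕ) (t : ℕ) : gridI a t = sSup (endingChainLengths (· > ·) a t) :=
  rfl

theorem gridJ_eq_sSup (a : List ℕ) (t : ℕ) : gridJ a t = sSup (endingChainLengths (· < ·) a t) :=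
  rfl

theorem grid_ne_of_lt {a : List ℕ} (ha : a.Nodup) {s t : ℕ} (hs₀ : 0 < s) (hst : s < t)
    (ht : t ≤ a.length) : (gridI a s, gridJ a s) ≠ (gridI a t, gridJ a t) := by
  have hne : a[s-1] ≠ a[t-1] := by rw [ne_eq, ha.getElem_inj_iff]; omega
  simp only [ne_eq, Prod.mk.injEq, gridI_eq_sSup, gridJ_eq_sSup, not_and_or]
  rcases hne.lt_or_gt with h | h
  · exact Or.inr (sSup_endingChainLengths_lt hs₀ hst ht h).ne
  · exact Or.inl (sSup_endingChainLengths_lt hs₀ hst ht h).ne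

theorem grid_injOn {a : List ℕ} (ha : a.Nodup) :
    Set.InjOn (fun t => (gridI a t, gridJ a t)) (Set.Icc 1 a.length) := by
  intro s ⟨hs₀, hs⟩ t ⟨ht₀, ht⟩ heq
  by_contra hne
  rcases Nat.lt_or_gt_of_ne hne with h | h
  · exact grid_ne_of_lt ha hs₀ h ht heq
  · exact grid_ne_of_lt ha ht₀ h hs heq.symm

theorem grid_bijection (k ℓ : ℕ) (a : List ℕ)
    (hperm : a.Perm (List.range' 1 (k*ℓ)))
    (hinc : ¬ ∃ s : List ℕ, s.Sublist a ∧ s.length = k+1 ∧ s.Pairwise (· < ·))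
    (hdec : ¬ ∃ s : List ℕ, s.Sublist a ∧ s.length = ℓ+1 ∧ s.Pairwise (· > ·)) :
    Set.BijOn (fun t => (gridI a t, gridJ a t))
      (↑(Finset.Icc 1 (k*ℓ)) : Set ℕ)
      (↑(Finset.Icc 1 ℓ ×ˢ Finset.Icc 1 k) : Set (ℕ × ℕ)) := by
  have hlen : a.length = k * ℓ := by rw [hperm.length_eq, List.length_range']
  have hmaps : Set.MapsTo (fun t => (gridI a t, gridJ a t))
      (↑(Finset.Icc 1 (k*ℓ)) : Set ℕ) (↑(Finset.Icc 1 ℓ ×ˢ Finset.Icc 1 k) : Set (ℕ × ℕ)) := by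
    intro t ht
    rw [Finset.coe_Icc, Set.mem_Icc] at ht
    exact Finset.mem_product.2
      ⟨sSup_endingChainLengths_mem_Icc hdec ht.1 (hlen ▸ ht.2),
        sSup_endingChainLengths_mem_Icc hinc ht.1 (hlen ▸ ht.2)⟩
  have hinj : Set.InjOn (fun t => (gridI a t, gridJ a t)) (↑(Finset.Icc 1 (k*ℓ)) : Set ℕ) := by
    rw [Finset.coe_Icc, ← hlen]
    exact grid_injOn (hperm.nodup_iff.2 List.nodup_range')
  refine ⟨hmaps, hinj, Finset.surjOn_of_injOn_of_card_le _ hmaps hinj ?_⟩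
  simp [Nat.mul_comm]
end

section
/- Let a ∈ S_{k,ℓ} (a permutation of {1,...,kℓ} with longest increasing subsequence length k and longest decreasing subsequence length ℓ) with grid function γ_a. If γ_a(t_1) = (i_1,j_1), γ_a(t_2) = (i_2,j_2), i_2 ≤ i_1, and j_2 ≤ j_1, then t_2 ≤ t_1. -/
def chainLengthsEndingAt {α : Type*} (r : α → α → Prop) (a : List α) (t : ℕ) : Set ℕ :=
  {n | ∃ s : List α, s.Sublist (a.take t) ∧ s.length = n ∧ s.getLast? = a[t-1]? ∧ s.Pairwise r}

noncomputable def longestChainEndingAt {α : Type*} (r : α → α → Prop) (a : List α) (t : ℕ) : ℕ :=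
  sSup (chainLengthsEndingAt r a t)

theorem gridI_eq_longestChainEndingAt (a : List ℕ) :
    gridI a = longestChainEndingAt (· > ·) a :=
  rfl

theorem gridJ_eq_longestChainEndingAt (a : List ℕ) :
    gridJ a = longestChainEndingAt (· < ·) a :=
  rfl

theorem List.Pairwise.append_singleton {α : Type*} {r : α → α → Prop} [Trans r r r]
    {s : List α} {y : α} (hs : s.Pairwise r) (hy : ∀ x ∈ s.getLast?, r x y) :
    (s ++ [y]).Pairwise r :=
  List.isChain_iff_pairwise.1 <|
    hs.isChain.append (List.isChain_singleton y) (by simpa using hy)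

section ChainLengths

variable {α : Type*} {r : α → α → Prop} {a : List α} {i j : ℕ} {x y : α}

theorem bddAbove_chainLengthsEndingAt (r : α → α → Prop) (a : List α) (t : ℕ) :
    BddAbove (chainLengthsEndingAt r a t) :=
  ⟨t, fun _ ⟨_, hsub, hlen, _⟩ => hlen ▸ hsub.length_le.trans (List.length_take_le t a)⟩

theorem one_mem_chainLengthsEndingAt (hx : a[i]? = some x) :
    1 ∈ chainLengthsEndingAt r a (i + 1) :=
  ⟨[x], by simp [List.take_add_one, hx], rfl, by simp [hx], List.pairwise_singleton r x⟩

theorem succ_mem_chainLengthsEndingAt [Trans r r r] {n : ℕ}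
    (hn : n ∈ chainLengthsEndingAt r a (i + 1)) (hij : i < j)
    (hx : a[i]? = some x) (hy : a[j]? = some y) (hxy : r x y) :
    n + 1 ∈ chainLengthsEndingAt r a (j + 1) := by
  obtain ⟨s, hsub, rfl, hlast, hs⟩ := hn
  simp only [Nat.add_sub_cancel, hx] at hlast
  refine ⟨s ++ [y], ?_, by simp, by simp [hy], hs.append_singleton (by simp [hlast, hxy])⟩
  rw [List.take_add_one, hy]
  exact (hsub.trans (List.take_prefix_take_left hij).sublist).append (List.Sublist.refl _)

theorem longestChainEndingAt_lt_of_rel [Trans r r r] (hij : i < j)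
    (hx : a[i]? = some x) (hy : a[j]? = some y) (hxy : r x y) :
    longestChainEndingAt r a (i + 1) < longestChainEndingAt r a (j + 1) := by
  have hmem : longestChainEndingAt r a (i + 1) ∈ chainLengthsEndingAt r a (i + 1) :=
    Nat.sSup_mem ⟨1, one_mem_chainLengthsEndingAt hx⟩ (bddAbove_chainLengthsEndingAt r a _)
  exact le_csSup (bddAbove_chainLengthsEndingAt r a _)
    (succ_mem_chainLengthsEndingAt hmem hij hx hy hxy)

end ChainLengths

theorem grid_ranking_order_general (k ℓ : ℕ) (a : List ℕ)
    (hperm : a.Perm (List.range' 1 (k*ℓ)))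
    (t₁ t₂ : ℕ) (ht₁ : t₁ ∈ Finset.Icc 1 (k*ℓ)) (ht₂ : t₂ ∈ Finset.Icc 1 (k*ℓ))
    (hi : gridI a t₂ ≤ gridI a t₁) (hj : gridJ a t₂ ≤ gridJ a t₁) :
    t₂ ≤ t₁ := by
  by_contra! hlt
  have hlen : a.length = k * ℓ := by simpa using hperm.length_eq
  have hnodup : a.Nodup := hperm.nodup_iff.2 List.nodup_range'
  rw [Finset.mem_Icc] at ht₁ ht₂
  obtain ⟨i, rfl⟩ : ∃ i, t₁ = i + 1 := ⟨t₁ - 1, by omega⟩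
  obtain ⟨j, rfl⟩ : ∃ j, t₂ = j + 1 := ⟨t₂ - 1, by omega⟩
  have hi_lt : i < a.length := by omega
  have hj_lt : j < a.length := by omega
  have hne : a[i] ≠ a[j] := fun h => by
    have := hnodup.getElem_inj_iff.1 h
    omega
  have hx := List.getElem?_eq_getElem hi_lt
  have hy := List.getElem?_eq_getElem hj_lt
  rw [gridI_eq_longestChainEndingAt] at hi
  rw [gridJ_eq_longestChainEndingAt] at hj
  rcases hne.lt_or_gt with hxy | hxy
  · exact hj.not_gt (longestChainEndingAt_lt_of_rel (by omega) hx hy hxy)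
  · exact hi.not_gt (longestChainEndingAt_lt_of_rel (by omega) hx hy hxy)

theorem grid_ranking_order (k ℓ : ℕ) (a : List ℕ)
    (hperm : a.Perm (List.range' 1 (k*ℓ)))
    (hinc : ¬ ∃ s : List ℕ, s.Sublist a ∧ s.length = k+1 ∧ s.Pairwise (· < ·))
    (hdec : ¬ ∃ s : List ℕ, s.Sublist a ∧ s.length = ℓ+1 ∧ s.Pairwise (· > ·))
    (t₁ t₂ : ℕ) (ht₁ : t₁ ∈ Finset.Icc 1 (k*ℓ)) (ht₂ : t₂ ∈ Finset.Icc 1 (k*ℓ))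
    (hi : gridI a t₂ ≤ gridI a t₁) (hj : gridJ a t₂ ≤ gridJ a t₁) :
    t₂ ≤ t₁ :=
  grid_ranking_order_general k ℓ a hperm t₁ t₂ ht₁ ht₂ hi hj
end

section
/- Let a ∈ S_{k,ℓ} with grid function γ_a. For each fixed i ∈ [ℓ], the sequence [a_{γ_a^{-1}(i,1)}, ..., a_{γ_a^{-1}(i,k)}] is an increasing subsequence of a (i.e., both the positions γ_a^{-1}(i,j) and the values increase in j), and for each fixed j ∈ [k], the sequence [a_{γ_a^{-1}(1,j)}, ..., a_{γ_a^{-1}(ℓ,j)}] is a decreasing subsequence of a (positions increase and values decrease in i). -/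
namespace List

variable {α : Type*}

def chainLengthsEndingAt (rel : α → α → Prop) (a : List α) (t : ℕ) : Set ℕ :=
  {r | ∃ s : List α, s.Sublist (a.take t) ∧ s.length = r ∧ s.getLast? = a[t-1]? ∧ s.Pairwise rel}

noncomputable def longestChainEndingAt (rel : α → α → Prop) (a : List α) (t : ℕ) : ℕ :=
  sSup (chainLengthsEndingAt rel a t)

variable {rel : α → α → Prop} {a : List α} {t t' : ℕ} {x y : α}

theorem getElem?_sub_one_eq_some_getD (d : α) (ht : t ∈ Finset.Icc 1 a.length) :
    a[t-1]? = some (a.getD (t - 1) d) := by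
  rw [Finset.mem_Icc] at ht
  rw [getD_eq_getElem?_getD, getElem?_eq_getElem (by omega), Option.getD_some]

theorem bddAbove_chainLengthsEndingAt : BddAbove (chainLengthsEndingAt rel a t) := by
  refine ⟨t, ?_⟩
  rintro n ⟨s, hs, rfl, -, -⟩
  exact hs.length_le.trans (length_take_le _ _)

theorem take_eq_take_sub_one_append (ht : 1 ≤ t) (hx : a[t-1]? = some x) :
    a.take t = a.take (t - 1) ++ [x] := by
  obtain ⟨n, rfl⟩ : ∃ n, t = n + 1 := ⟨t - 1, by omega⟩
  rw [Nat.add_sub_cancel] at hx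
  simpa [hx] using take_add_one (l := a) (i := n)

theorem one_mem_chainLengthsEndingAt (ht : 1 ≤ t) (hx : a[t-1]? = some x) :
    1 ∈ chainLengthsEndingAt rel a t := by
  refine ⟨[x], ?_, rfl, by simp [hx], pairwise_singleton _ _⟩
  rw [take_eq_take_sub_one_append ht hx]
  exact sublist_append_right _ _

theorem Pairwise.append_singleton_of_getLast? [IsTrans α rel] {s : List α}
    (hs : s.Pairwise rel) (hlast : s.getLast? = some x) (hxy : rel x y) :
    (s ++ [y]).Pairwise rel := by
  obtain ⟨s, rfl⟩ := getLast?_eq_some_iff.1 hlast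
  have hsx : ∀ u ∈ s, rel u x := by simpa using (pairwise_append.1 hs).2.2
  refine pairwise_append.2 ⟨hs, pairwise_singleton _ _, ?_⟩
  simp only [mem_append, mem_singleton, forall_eq]
  rintro u (hu | rfl)
  · exact _root_.trans (hsx u hu) hxy
  · exact hxy

theorem succ_mem_chainLengthsEndingAt [IsTrans α rel] {n : ℕ}
    (hn : n ∈ chainLengthsEndingAt rel a t) (hx : a[t-1]? = some x) (htt' : t < t')
    (hy : a[t'-1]? = some y) (hxy : rel x y) :
    n + 1 ∈ chainLengthsEndingAt rel a t' := by
  obtain ⟨s, hsub, rfl, hlast, hs⟩ := hn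
  refine ⟨s ++ [y], ?_, by simp, by simp [hy], ?_⟩
  · rw [take_eq_take_sub_one_append (by omega) hy]
    refine (hsub.trans ?_).append (Sublist.refl _)
    exact take_sublist_take_left (by omega)
  · exact hs.append_singleton_of_getLast? (hlast.trans hx) hxy

theorem longestChainEndingAt_lt [IsTrans α rel] (ht : 1 ≤ t) (hx : a[t-1]? = some x)
    (htt' : t < t') (hy : a[t'-1]? = some y) (hxy : rel x y) :
    longestChainEndingAt rel a t < longestChainEndingAt rel a t' := by
  have hmax := Nat.sSup_mem ⟨1, one_mem_chainLengthsEndingAt ht hx⟩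
    (bddAbove_chainLengthsEndingAt (rel := rel) (a := a) (t := t))
  exact Nat.lt_of_succ_le <|
    le_csSup bddAbove_chainLengthsEndingAt (succ_mem_chainLengthsEndingAt hmax hx htt' hy hxy)

theorem lt_and_rel_of_longestChainEndingAt [IsTrans α rel] [Std.Trichotomous rel]
    (ha : a.Nodup) (ht : 1 ≤ t) (ht' : 1 ≤ t') (hx : a[t-1]? = some x) (hy : a[t'-1]? = some y)
    (hswap : longestChainEndingAt (Function.swap rel) a t =
      longestChainEndingAt (Function.swap rel) a t')
    (hlt : longestChainEndingAt rel a t < longestChainEndingAt rel a t') :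
    t < t' ∧ rel x y := by
  have hne : t ≠ t' := by rintro rfl; exact lt_irrefl _ hlt
  have hxy : x ≠ y := by
    rintro rfl
    obtain ⟨hi, hxi⟩ := getElem?_eq_some_iff.1 hx
    obtain ⟨hj, hyj⟩ := getElem?_eq_some_iff.1 hy
    have := (ha.getElem_inj_iff (hi := hi) (hj := hj)).1 (hxi.trans hyj.symm)
    omega
  rcases Nat.lt_or_gt_of_ne hne with htt' | ht't
  · refine ⟨htt', ?_⟩
    rcases trichotomous_of rel x y with h | h | h
    · exact h
    · exact absurd h hxy
    · exact absurd hswap (longestChainEndingAt_lt (rel := Function.swap rel) ht hx htt' hy h).ne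
  · exfalso
    rcases trichotomous_of rel x y with h | h | h
    · exact (longestChainEndingAt_lt (rel := Function.swap rel) ht' hy ht't hx h).ne hswap.symm
    · exact hxy h
    · exact lt_asymm hlt (longestChainEndingAt_lt ht' hy ht't hx h)

end List

open List

theorem grid_rows_inc_cols_dec_general (k ℓ : ℕ) (a : List ℕ)
    (hperm : a.Perm (List.range' 1 (k*ℓ)))
    (r : ℕ → ℕ → ℕ)
    (hr : ∀ i ∈ Finset.Icc 1 ℓ, ∀ j ∈ Finset.Icc 1 k,
      r i j ∈ Finset.Icc 1 (k*ℓ) ∧ gridI a (r i j) = i ∧ gridJ a (r i j) = j) :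
    (∀ i ∈ Finset.Icc 1 ℓ, ∀ j ∈ Finset.Icc 1 k, ∀ j' ∈ Finset.Icc 1 k, j < j' →
      r i j < r i j' ∧ a.getD (r i j - 1) 0 < a.getD (r i j' - 1) 0) ∧
    (∀ j ∈ Finset.Icc 1 k, ∀ i ∈ Finset.Icc 1 ℓ, ∀ i' ∈ Finset.Icc 1 ℓ, i < i' →
      r i j < r i' j ∧ a.getD (r i' j - 1) 0 < a.getD (r i j - 1) 0) := by
  have hlen : a.length = k * ℓ := by simpa using hperm.length_eq
  have hnodup : a.Nodup := hperm.nodup_iff.2 nodup_range'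
  have hpos : ∀ i ∈ Finset.Icc 1 ℓ, ∀ j ∈ Finset.Icc 1 k,
      1 ≤ r i j ∧ a[r i j - 1]? = some (a.getD (r i j - 1) 0) := by
    intro i hi j hj
    have hrij := (hr i hi j hj).1
    exact ⟨(Finset.mem_Icc.1 hrij).1, getElem?_sub_one_eq_some_getD 0 (hlen ▸ hrij)⟩
  -- `gridI` and `gridJ` unfold to `longestChainEndingAt (· > ·)` and `longestChainEndingAt (· < ·)`.
  constructor
  · intro i hi j hj j' hj' hjj'
    obtain ⟨-, hI, hJ⟩ := hr i hi j hj
    obtain ⟨-, hI', hJ'⟩ := hr i hi j' hj'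
    refine lt_and_rel_of_longestChainEndingAt (rel := (· < ·)) hnodup (hpos i hi j hj).1
      (hpos i hi j' hj').1 (hpos i hi j hj).2 (hpos i hi j' hj').2 ?_ ?_
    · exact hI.trans hI'.symm
    · change gridJ a _ < gridJ a _
      omega
  · intro j hj i hi i' hi' hii'
    obtain ⟨-, hI, hJ⟩ := hr i hi j hj
    obtain ⟨-, hI', hJ'⟩ := hr i' hi' j hj
    refine lt_and_rel_of_longestChainEndingAt (rel := (· > ·)) hnodup (hpos i hi j hj).1
      (hpos i' hi' j hj).1 (hpos i hi j hj).2 (hpos i' hi' j hj).2 ?_ ?_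
    · exact hJ.trans hJ'.symm
    · change gridI a _ < gridI a _
      omega

theorem grid_rows_inc_cols_dec (k ℓ : ℕ) (a : List ℕ)
    (hperm : a.Perm (List.range' 1 (k*ℓ)))
    (hinc : ¬ ∃ s : List ℕ, s.Sublist a ∧ s.length = k+1 ∧ s.Pairwise (· < ·))
    (hdec : ¬ ∃ s : List ℕ, s.Sublist a ∧ s.length = ℓ+1 ∧ s.Pairwise (· > ·))
    (r : ℕ → ℕ → ℕ)
    (hr : ∀ i ∈ Finset.Icc 1 ℓ, ∀ j ∈ Finset.Icc 1 k,
      r i j ∈ Finset.Icc 1 (k*ℓ) ∧ gridI a (r i j) = i ∧ gridJ a (r i j) = j) :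
    (∀ i ∈ Finset.Icc 1 ℓ, ∀ j ∈ Finset.Icc 1 k, ∀ j' ∈ Finset.Icc 1 k, j < j' →
      r i j < r i j' ∧ a.getD (r i j - 1) 0 < a.getD (r i j' - 1) 0) ∧
    (∀ j ∈ Finset.Icc 1 k, ∀ i ∈ Finset.Icc 1 ℓ, ∀ i' ∈ Finset.Icc 1 ℓ, i < i' →
      r i j < r i' j ∧ a.getD (r i' j - 1) 0 < a.getD (r i j - 1) 0) :=
  grid_rows_inc_cols_dec_general k ℓ a hperm r hr
end

section
/- The map φ sending a ∈ S_{k,ℓ} to the pair (R_a, V_a) of its grid-ranking and grid-valuation is injective. -/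
namespace List

variable {α : Type*} (r : α → α → Prop)

/-- `gridI a t` and `gridJ a t` are by definition the suprema of this set for `r = (· > ·)` and
`r = (· < ·)`. -/
def endingLengths (a : List α) (t : ℕ) : Set ℕ :=
  {n | ∃ s : List α, s.Sublist (a.take t) ∧ s.length = n ∧
    s.getLast? = a[t-1]? ∧ s.Pairwise r}

variable {r} {a : List α} {t t' : ℕ}

theorem take_eq_take_sub_one_append_s11 (h1 : 1 ≤ t) (h2 : t ≤ a.length) :
    a.take t = a.take (t - 1) ++ [a[t - 1]] := by
  rw [take_concat_get', Nat.sub_add_cancel h1]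

theorem bddAbove_endingLengths : BddAbove (a.endingLengths r t) :=
  ⟨(a.take t).length, by rintro _ ⟨s, hs, rfl, -⟩; exact hs.length_le⟩

theorem one_mem_endingLengths (h1 : 1 ≤ t) (h2 : t ≤ a.length) :
    1 ∈ a.endingLengths r t := by
  have ht : t - 1 < a.length := by omega
  refine ⟨[a[t-1]], singleton_sublist.2 ?_, rfl, by simp [ht], pairwise_singleton _ _⟩
  rw [take_eq_take_sub_one_append_s11 h1 h2]
  exact mem_concat_self

theorem sSup_endingLengths_le {m : ℕ}
    (hno : ¬ ∃ s : List α, s.Sublist a ∧ s.length = m + 1 ∧ s.Pairwise r) :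
    sSup (a.endingLengths r t) ≤ m := by
  refine csSup_le' ?_
  rintro n ⟨s, hs, rfl, -, hr⟩
  by_contra! hlt
  exact hno ⟨s.take (m + 1), (take_sublist _ _).trans (hs.trans (take_sublist _ _)),
    by simp; omega, hr.sublist (take_sublist _ _)⟩

theorem succ_mem_endingLengths [Trans r r r] {n : ℕ} (hn : n ∈ a.endingLengths r t)
    (htt : t < t') (h2 : t' ≤ a.length) (hr : r a[t-1] a[t'-1]) :
    n + 1 ∈ a.endingLengths r t' := by
  obtain ⟨s, hs, rfl, hlast, hchain⟩ := hn
  have ht' : t' - 1 < a.length := by omega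
  refine ⟨s ++ [a[t'-1]], ?_, length_append .., by simp [ht'], ?_⟩
  · rw [take_eq_take_sub_one_append_s11 (by omega) h2]
    exact (hs.trans (take_sublist_take_left (by omega))).append (Sublist.refl _)
  · rw [← isChain_iff_pairwise] at hchain ⊢
    refine hchain.append (isChain_singleton _) ?_
    rw [hlast, getElem?_eq_getElem (by omega)]
    simpa using hr

theorem sSup_endingLengths_lt [Trans r r r] (h1 : 1 ≤ t) (htt : t < t') (h2 : t' ≤ a.length)
    (hr : r a[t-1] a[t'-1]) :
    sSup (a.endingLengths r t) < sSup (a.endingLengths r t') :=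
  Nat.lt_of_succ_le <| le_csSup bddAbove_endingLengths <|
    succ_mem_endingLengths (Nat.sSup_mem ⟨1, one_mem_endingLengths h1 (by omega)⟩
      bddAbove_endingLengths) htt h2 hr

end List

section Grid

open List

variable {a : List ℕ} {t t' : ℕ}

theorem gridI_mem_Icc {ℓ : ℕ}
    (hdec : ¬ ∃ s : List ℕ, s.Sublist a ∧ s.length = ℓ + 1 ∧ s.Pairwise (· > ·))
    (h1 : 1 ≤ t) (h2 : t ≤ a.length) : gridI a t ∈ Finset.Icc 1 ℓ :=
  Finset.mem_Icc.2 ⟨le_csSup bddAbove_endingLengths (one_mem_endingLengths h1 h2),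
    sSup_endingLengths_le hdec⟩

theorem gridJ_mem_Icc {k : ℕ}
    (hinc : ¬ ∃ s : List ℕ, s.Sublist a ∧ s.length = k + 1 ∧ s.Pairwise (· < ·))
    (h1 : 1 ≤ t) (h2 : t ≤ a.length) : gridJ a t ∈ Finset.Icc 1 k :=
  Finset.mem_Icc.2 ⟨le_csSup bddAbove_endingLengths (one_mem_endingLengths h1 h2),
    sSup_endingLengths_le hinc⟩

theorem gridI_lt_or_gridJ_lt (hnd : a.Nodup) (h1 : 1 ≤ t) (htt : t < t') (h2 : t' ≤ a.length) :
    gridI a t < gridI a t' ∨ gridJ a t < gridJ a t' := by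
  have hne : a[t-1] ≠ a[t'-1] := fun h => by
    have := hnd.getElem_inj_iff.1 h
    omega
  rcases hne.lt_or_gt with hlt | hgt
  · exact .inr (sSup_endingLengths_lt h1 htt h2 hlt)
  · exact .inl (sSup_endingLengths_lt (r := (· > ·)) h1 htt h2 hgt)

theorem eq_of_gridI_eq_of_gridJ_eq (hnd : a.Nodup) (h1 : 1 ≤ t) (h2 : t ≤ a.length)
    (h1' : 1 ≤ t') (h2' : t' ≤ a.length) (hI : gridI a t = gridI a t')
    (hJ : gridJ a t = gridJ a t') : t = t' := by
  rcases Nat.lt_trichotomy t t' with hlt | heq | hgt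
  · have := gridI_lt_or_gridJ_lt hnd h1 hlt h2'
    omega
  · exact heq
  · have := gridI_lt_or_gridJ_lt hnd h1' hgt h2
    omega

end Grid

theorem phi_injective_general (k ℓ : ℕ) (a b : List ℕ)
    (hperma : a.Perm (List.range' 1 (k*ℓ)))
    (hinca : ¬ ∃ s : List ℕ, s.Sublist a ∧ s.length = k+1 ∧ s.Pairwise (· < ·))
    (hdeca : ¬ ∃ s : List ℕ, s.Sublist a ∧ s.length = ℓ+1 ∧ s.Pairwise (· > ·))
    (hpermb : b.Perm (List.range' 1 (k*ℓ)))
    (ra rb : ℕ → ℕ → ℕ)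
    (hra : ∀ i ∈ Finset.Icc 1 ℓ, ∀ j ∈ Finset.Icc 1 k,
      ra i j ∈ Finset.Icc 1 (k*ℓ) ∧ gridI a (ra i j) = i ∧ gridJ a (ra i j) = j)
    (heq : ∀ i ∈ Finset.Icc 1 ℓ, ∀ j ∈ Finset.Icc 1 k,
      ra i j = rb i j ∧
      a.getD (ra (ℓ+1-i) j - 1) 0 = b.getD (rb (ℓ+1-i) j - 1) 0) :
    a = b := by
  have hlena : a.length = k * ℓ := by simpa using hperma.length_eq
  have hlenb : b.length = k * ℓ := by simpa using hpermb.length_eq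
  have hnda : a.Nodup := hperma.nodup_iff.2 List.nodup_range'
  refine List.ext_getElem (hlena.trans hlenb.symm) fun n hna hnb => ?_
  have hI := gridI_mem_Icc hdeca (t := n + 1) (by omega) hna
  have hJ := gridJ_mem_Icc hinca (t := n + 1) (by omega) hna
  set i := gridI a (n + 1)
  set j := gridJ a (n + 1)
  obtain ⟨hra_mem, hra_I, hra_J⟩ := hra i hI j hJ
  have hra_pos : ra i j = n + 1 := by
    rw [Finset.mem_Icc] at hra_mem
    exact eq_of_gridI_eq_of_gridJ_eq hnda hra_mem.1 (by omega) (by omega) hna hra_I hra_J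
  -- V_a and V_b agree at row `ℓ + 1 - i`, which reads the entry of the grid cell `(i, j)`.
  have hi : ℓ + 1 - (ℓ + 1 - i) = i := by rw [Finset.mem_Icc] at hI; omega
  have hval := (heq (ℓ + 1 - i) (by simp only [Finset.mem_Icc] at hI ⊢; omega) j hJ).2
  rw [hi, ← (heq i hI j hJ).1, hra_pos, Nat.add_sub_cancel] at hval
  rwa [List.getD_eq_getElem _ _ hna, List.getD_eq_getElem _ _ hnb] at hval

theorem phi_injective (k ℓ : ℕ) (a b : List ℕ)
    (hperma : a.Perm (List.range' 1 (k*ℓ)))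
    (hinca : ¬ ∃ s : List ℕ, s.Sublist a ∧ s.length = k+1 ∧ s.Pairwise (· < ·))
    (hdeca : ¬ ∃ s : List ℕ, s.Sublist a ∧ s.length = ℓ+1 ∧ s.Pairwise (· > ·))
    (hpermb : b.Perm (List.range' 1 (k*ℓ)))
    (hincb : ¬ ∃ s : List ℕ, s.Sublist b ∧ s.length = k+1 ∧ s.Pairwise (· < ·))
    (hdecb : ¬ ∃ s : List ℕ, s.Sublist b ∧ s.length = ℓ+1 ∧ s.Pairwise (· > ·))
    (ra rb : ℕ → ℕ → ℕ)
    (hra : ∀ i ∈ Finset.Icc 1 ℓ, ∀ j ∈ Finset.Icc 1 k,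
      ra i j ∈ Finset.Icc 1 (k*ℓ) ∧ gridI a (ra i j) = i ∧ gridJ a (ra i j) = j)
    (hrb : ∀ i ∈ Finset.Icc 1 ℓ, ∀ j ∈ Finset.Icc 1 k,
      rb i j ∈ Finset.Icc 1 (k*ℓ) ∧ gridI b (rb i j) = i ∧ gridJ b (rb i j) = j)
    (heq : ∀ i ∈ Finset.Icc 1 ℓ, ∀ j ∈ Finset.Icc 1 k,
      ra i j = rb i j ∧
      a.getD (ra (ℓ+1-i) j - 1) 0 = b.getD (rb (ℓ+1-i) j - 1) 0) :
    a = b :=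
  phi_injective_general k ℓ a b hperma hinca hdeca hpermb ra rb hra heq
end

section
/- Let R = (r_{ij}) and V = (v_{ij}) be ℓ×k standard Young tableaux (entries {1,...,kℓ}, rows and columns increasing), and define the sequence a = [a_1,...,a_{kℓ}] by a_t = v_{ij} iff t = r_{ℓ+1-i,j}. Then a is a permutation of {1,...,kℓ} with no increasing subsequence of length k+1 and no decreasing subsequence of length ℓ+1. -/
/-- `M`, restricted to `{1,…,ℓ} × {1,…,k}`, is a standard Young tableau of
rectangular shape `ℓ × k`: its entries are exactly `{1,…,kℓ}` and every row
and every column is strictly increasing. -/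
def IsSYT (ℓ k : ℕ) (M : ℕ → ℕ → ℕ) : Prop :=
  Set.BijOn (fun p : ℕ × ℕ => M p.1 p.2)
    (↑(Finset.Icc 1 ℓ ×ˢ Finset.Icc 1 k) : Set (ℕ × ℕ))
    (↑(Finset.Icc 1 (k*ℓ)) : Set ℕ) ∧
  (∀ i ∈ Finset.Icc 1 ℓ, ∀ j ∈ Finset.Icc 1 k, ∀ j' ∈ Finset.Icc 1 k,
    j < j' → M i j < M i j') ∧
  (∀ i ∈ Finset.Icc 1 ℓ, ∀ i' ∈ Finset.Icc 1 ℓ, ∀ j ∈ Finset.Icc 1 k,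
    i < i' → M i j < M i' j)

/-!
Read the cells `(i, j)` of the rectangle in the order in which `t = R (ℓ+1-i) j` increases;
then `a` lists the entries `V i j` in that order. This order is increasing along rows and
decreasing along columns, while `V` increases along both. Hence if a later cell carries a
larger `V`-entry it lies in a strictly later column, and if it carries a smaller one it lies
in a strictly higher row. An increasing subsequence therefore uses distinct columns and a
decreasing one distinct rows, so their lengths are at most `k` and `ℓ`.
-/

lemma List.length_le_card_of_sublist_map {γ α β : Type*} [DecidableEq β]
    {L : List γ} {g : γ → α} {f : γ → β} {S : Finset β}
    {before : γ → γ → Prop} {r : α → α → Prop}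
    (hL : L.Pairwise before) (hS : ∀ p ∈ L, f p ∈ S)
    (hf : ∀ p ∈ L, ∀ q ∈ L, before p q → r (g p) (g q) → f p ≠ f q)
    {s : List α} (hs : s.Sublist (L.map g)) (hr : s.Pairwise r) :
    s.length ≤ S.card := by
  obtain ⟨L', hL', rfl⟩ := List.sublist_map_iff.mp hs
  have hnodup : (L'.map f).Nodup :=
    List.pairwise_map.mpr <| ((hL.sublist hL').and (List.pairwise_map.mp hr)).imp_of_mem
      fun hp hq h => hf _ (hL'.subset hp) _ (hL'.subset hq) h.1 h.2
  calc (L'.map g).length = (L'.map f).length := by simp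
    _ = (L'.map f).toFinset.card := (List.toFinset_card_of_nodup hnodup).symm
    _ ≤ S.card := Finset.card_le_card fun x hx => by
      obtain ⟨p, hp, rfl⟩ := List.mem_map.mp (List.mem_toFinset.mp hx)
      exact hS p (hL'.subset hp)

namespace IsSYT

variable {ℓ k : ℕ} {M : ℕ → ℕ → ℕ}

lemma le_of_le (h : IsSYT ℓ k M) {i i' j j' : ℕ}
    (hi : i ∈ Finset.Icc 1 ℓ) (hi' : i' ∈ Finset.Icc 1 ℓ)
    (hj : j ∈ Finset.Icc 1 k) (hj' : j' ∈ Finset.Icc 1 k)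
    (hii : i ≤ i') (hjj : j ≤ j') : M i j ≤ M i' j' := by
  obtain ⟨-, hrow, hcol⟩ := h
  have hrow_le : M i j ≤ M i j' := by
    rcases hjj.lt_or_eq with hlt | rfl
    exacts [(hrow i hi j hj j' hj' hlt).le, le_rfl]
  have hcol_le : M i j' ≤ M i' j' := by
    rcases hii.lt_or_eq with hlt | rfl
    exacts [(hcol i hi i' hi' j' hj' hlt).le, le_rfl]
  exact hrow_le.trans hcol_le

variable {R V : ℕ → ℕ → ℕ}

lemma map_perm_range' (hV : IsSYT ℓ k V) {L : List (ℕ × ℕ)} (hL : L.Nodup)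
    (hL_rect : ∀ p ∈ L, p ∈ Finset.Icc 1 ℓ ×ˢ Finset.Icc 1 k) (hlen : L.length = k*ℓ) :
    (L.map fun p => V p.1 p.2).Perm (List.range' 1 (k*ℓ)) := by
  have hnodup : (L.map fun p => V p.1 p.2).Nodup :=
    hL.map_on fun p hp q hq hpq =>
      hV.1.injOn (Finset.mem_coe.mpr (hL_rect p hp)) (Finset.mem_coe.mpr (hL_rect q hq)) hpq
  have hsub : (L.map fun p => V p.1 p.2) ⊆ List.range' 1 (k*ℓ) := by
    intro x hx
    obtain ⟨p, hp, rfl⟩ := List.mem_map.mp hx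
    have := hV.1.mapsTo (Finset.mem_coe.mpr (hL_rect p hp))
    simp only [Finset.coe_Icc, Set.mem_Icc] at this
    exact List.mem_range'_1.mpr (by omega)
  exact (hnodup.subperm hsub).perm_of_length_le (by simp [hlen])

lemma snd_lt_of_lt_of_lt (hR : IsSYT ℓ k R) (hV : IsSYT ℓ k V)
    {p q : ℕ × ℕ} (hp : p ∈ Finset.Icc 1 ℓ ×ˢ Finset.Icc 1 k)
    (hq : q ∈ Finset.Icc 1 ℓ ×ˢ Finset.Icc 1 k)
    (hRpq : R (ℓ+1-p.1) p.2 < R (ℓ+1-q.1) q.2) (hVpq : V p.1 p.2 < V q.1 q.2) :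
    p.2 < q.2 := by
  rw [Finset.mem_product] at hp hq
  by_contra! hqp
  have hpq₁ : p.1 < q.1 := by
    by_contra! hqp₁
    exact (hV.le_of_le hq.1 hp.1 hq.2 hp.2 hqp₁ hqp).not_gt hVpq
  have := Finset.mem_Icc.mp hp.1
  have := Finset.mem_Icc.mp hq.1
  refine (hR.le_of_le ?_ ?_ hq.2 hp.2 (by omega) hqp).not_gt hRpq <;>
    exact Finset.mem_Icc.mpr (by omega)

lemma fst_lt_of_lt_of_gt (hR : IsSYT ℓ k R) (hV : IsSYT ℓ k V)
    {p q : ℕ × ℕ} (hp : p ∈ Finset.Icc 1 ℓ ×ˢ Finset.Icc 1 k)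
    (hq : q ∈ Finset.Icc 1 ℓ ×ˢ Finset.Icc 1 k)
    (hRpq : R (ℓ+1-p.1) p.2 < R (ℓ+1-q.1) q.2) (hVqp : V q.1 q.2 < V p.1 p.2) :
    q.1 < p.1 := by
  rw [Finset.mem_product] at hp hq
  by_contra! hpq₁
  have hqp₂ : q.2 < p.2 := by
    by_contra! hpq₂
    exact (hV.le_of_le hp.1 hq.1 hp.2 hq.2 hpq₁ hpq₂).not_gt hVqp
  have := Finset.mem_Icc.mp hp.1
  have := Finset.mem_Icc.mp hq.1
  refine (hR.le_of_le ?_ ?_ hq.2 hp.2 (by omega) hqp₂.le).not_gt hRpq <;>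
    exact Finset.mem_Icc.mpr (by omega)

lemma exists_cells_of_getD_eq (hR : IsSYT ℓ k R) {a : List ℕ} (ha : a.length = k*ℓ)
    (hdef : ∀ i ∈ Finset.Icc 1 ℓ, ∀ j ∈ Finset.Icc 1 k,
      a.getD (R (ℓ+1-i) j - 1) 0 = V i j) :
    ∃ L : List (ℕ × ℕ), a = L.map (fun p => V p.1 p.2) ∧
      (∀ p ∈ L, p ∈ Finset.Icc 1 ℓ ×ˢ Finset.Icc 1 k) ∧
      L.Pairwise (fun p q => R (ℓ+1-p.1) p.2 < R (ℓ+1-q.1) q.2) := by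
  have hcell : ∀ t < k*ℓ,
      ∃ p ∈ Finset.Icc 1 ℓ ×ˢ Finset.Icc 1 k, R (ℓ+1-p.1) p.2 = t+1 := by
    intro t ht
    have ht₁ : t+1 ∈ (↑(Finset.Icc 1 (k*ℓ)) : Set ℕ) := by
      simp only [Finset.coe_Icc, Set.mem_Icc]; omega
    obtain ⟨⟨i, j⟩, hij, hRij⟩ := hR.1.surjOn ht₁
    simp only [Finset.coe_product, Set.mem_prod, Finset.coe_Icc, Set.mem_Icc] at hij
    refine ⟨(ℓ+1-i, j), ?_, ?_⟩
    · simp only [Finset.mem_product, Finset.mem_Icc]; omega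
    · simpa [show ℓ+1-(ℓ+1-i) = i by omega] using hRij
  choose! cell hcell_mem hcell_R using hcell
  refine ⟨(List.range (k*ℓ)).map cell, ?_, by simpa using hcell_mem, ?_⟩
  · refine List.ext_getElem (by simp [ha]) fun t ht _ => ?_
    have ht' : t < k*ℓ := ha ▸ ht
    have := Finset.mem_product.mp (hcell_mem t ht')
    simpa [hcell_R t ht', List.getElem?_eq_getElem ht] using hdef _ this.1 _ this.2
  · refine List.pairwise_map.mpr (List.pairwise_lt_range.imp_of_mem fun ht ht' htt' => ?_)
    rw [hcell_R _ (List.mem_range.mp ht), hcell_R _ (List.mem_range.mp ht')]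
    omega

end IsSYT

theorem tableau_pair_gives_extremal (k ℓ : ℕ) (R V : ℕ → ℕ → ℕ)
    (hR : IsSYT ℓ k R) (hV : IsSYT ℓ k V)
    (a : List ℕ) (ha : a.length = k*ℓ)
    (hdef : ∀ i ∈ Finset.Icc 1 ℓ, ∀ j ∈ Finset.Icc 1 k,
      a.getD (R (ℓ+1-i) j - 1) 0 = V i j) :
    a.Perm (List.range' 1 (k*ℓ)) ∧
    (¬ ∃ s : List ℕ, s.Sublist a ∧ s.length = k+1 ∧ s.Pairwise (· < ·)) ∧
    (¬ ∃ s : List ℕ, s.Sublist a ∧ s.length = ℓ+1 ∧ s.Pairwise (· > ·)) := by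
  obtain ⟨L, rfl, hL_rect, hL_sorted⟩ := hR.exists_cells_of_getD_eq ha hdef
  refine ⟨hV.map_perm_range' (hL_sorted.imp fun h hpq => h.ne (by rw [hpq])) hL_rect
    (by simpa using ha), ?_, ?_⟩
  · rintro ⟨s, hs, hlen, hinc⟩
    have := List.length_le_card_of_sublist_map (f := Prod.snd) (S := Finset.Icc 1 k)
      hL_sorted (fun p hp => (Finset.mem_product.mp (hL_rect p hp)).2)
      (fun p hp q hq hRpq hVpq =>
        (hR.snd_lt_of_lt_of_lt hV (hL_rect p hp) (hL_rect q hq) hRpq hVpq).ne)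
      hs hinc
    rw [Nat.card_Icc, hlen] at this
    omega
  · rintro ⟨s, hs, hlen, hdec⟩
    have := List.length_le_card_of_sublist_map (f := Prod.fst) (S := Finset.Icc 1 ℓ)
      hL_sorted (fun p hp => (Finset.mem_product.mp (hL_rect p hp)).1)
      (fun p hp q hq hRpq hVqp =>
        (hR.fst_lt_of_lt_of_gt hV (hL_rect p hp) (hL_rect q hq) hRpq hVqp).ne')
      hs hdec
    rw [Nat.card_Icc, hlen] at this
    omega
end

section
/- The map φ : S_{k,ℓ} → Y_{ℓ,k} × Y_{ℓ,k} defined by φ(a) = (R_a, V_a) is a bijection between the set of permutations of {1,...,kℓ} avoiding increasing subsequences of length k+1 and decreasing subsequences of length ℓ+1, and pairs of ℓ×k rectangular standard Young tableaux. -/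
/-- The (1-based) position in `a` where the grid function takes value `(i,j)`. -/
noncomputable def gridInv (a : List ℕ) (i j : ℕ) : ℕ :=
  sInf {t | 1 ≤ t ∧ gridI a t = i ∧ gridJ a t = j}

/-- The set `S_{k,ℓ}`: permutations of `{1,…,kℓ}` with no increasing subsequence
of length `k+1` and no decreasing subsequence of length `ℓ+1`. -/
def PermSet (k ℓ : ℕ) : Set (List ℕ) :=
  {a | a.Perm (List.range' 1 (k*ℓ)) ∧
    (¬ ∃ s : List ℕ, s.Sublist a ∧ s.length = k+1 ∧ s.Pairwise (· < ·)) ∧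
    (¬ ∃ s : List ℕ, s.Sublist a ∧ s.length = ℓ+1 ∧ s.Pairwise (· > ·))}

/-- The set `Y_{ℓ,k}` of rectangular `ℓ × k` standard Young tableaux. -/
def YSet (ℓ k : ℕ) : Set (Matrix (Fin ℓ) (Fin k) ℕ) :=
  {M | Set.BijOn (fun p : Fin ℓ × Fin k => M p.1 p.2) Set.univ
        (↑(Finset.Icc 1 (k*ℓ)) : Set ℕ) ∧
    (∀ i, StrictMono (M i)) ∧ (∀ j, StrictMono (fun i => M i j))}

/-- The grid-ranking `R_a` of a sequence `a`. -/
noncomputable def gridRanking (ℓ k : ℕ) (a : List ℕ) : Matrix (Fin ℓ) (Fin k) ℕ :=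
  Matrix.of fun i j => gridInv a (i.1 + 1) (j.1 + 1)

/-- The grid-valuation `V_a` of a sequence `a`. -/
noncomputable def gridValuation (ℓ k : ℕ) (a : List ℕ) : Matrix (Fin ℓ) (Fin k) ℕ :=
  Matrix.of fun i j => a.getD (gridInv a (ℓ - i.1) (j.1 + 1) - 1) 0

/-!
Reading position `t` of `a` as the cell `γ_a(t)`: for `s < t`, `a_s < a_t` forces the
increasing coordinate of `γ_a(t)` above that of `γ_a(s)`, and `a_s > a_t` does the same for
the decreasing coordinate. So `γ_a` is injective, and for `a ∈ S_{k,ℓ}` it is a bijection from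
the `kℓ` positions onto the `ℓ × k` cells. Along a row of cells positions and values increase,
down a column positions increase and values decrease; hence `R_a` and `V_a` (which lists the
rows of cells bottom-up) are standard tableaux, and `a` is recovered as
`a_{R_a(i,j)} = V_a(ℓ+1-i, j)`.

Conversely, given tableaux `(P, Q)`, put `Q(ℓ+1-i, j)` at position `P(i,j)`. The tableau
conditions force every increasing step of this word to move to a cell strictly further right,
and every decreasing step to a cell strictly further down, while the left and upper neighbours
of a cell realise such steps. Hence `γ` of position `P(i,j)` is `(i,j)`, which gives back
`(R, V) = (P, Q)`.
-/

section LongestChain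

variable {α : Type*} (r : α → α → Prop)

def chainLengths (a : List α) (t : ℕ) : Set ℕ :=
  {m | ∃ s : List α, s.Sublist (a.take t) ∧ s.length = m ∧
    s.getLast? = a[t-1]? ∧ s.Pairwise r}

noncomputable def longestChain (a : List α) (t : ℕ) : ℕ := sSup (chainLengths r a t)

variable {r} {a : List α}

theorem chainLengths_bddAbove (t : ℕ) : BddAbove (chainLengths r a t) := by
  refine ⟨t, ?_⟩
  rintro _ ⟨s, hs, rfl, -, -⟩
  exact hs.length_le.trans (List.length_take_le _ _)

theorem le_longestChain {t m : ℕ} (h : m ∈ chainLengths r a t) : m ≤ longestChain r a t :=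
  le_csSup (chainLengths_bddAbove t) h

theorem longestChain_le {t n : ℕ} (h : ∀ m ∈ chainLengths r a t, m ≤ n) :
    longestChain r a t ≤ n := by
  rcases (chainLengths r a t).eq_empty_or_nonempty with he | hne
  · simp [longestChain, he]
  · exact csSup_le hne h

theorem one_mem_chainLengths {p : ℕ} (hp : p < a.length) : 1 ∈ chainLengths r a (p + 1) := by
  refine ⟨[a[p]], ?_, rfl, by simp [hp], List.pairwise_singleton _ _⟩
  rw [List.take_succ_eq_append_getElem hp]
  exact List.sublist_append_right _ _

theorem one_le_longestChain {p : ℕ} (hp : p < a.length) : 1 ≤ longestChain r a (p + 1) :=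
  le_longestChain (one_mem_chainLengths hp)

theorem longestChain_mem {p : ℕ} (hp : p < a.length) :
    longestChain r a (p + 1) ∈ chainLengths r a (p + 1) :=
  Nat.sSup_mem ⟨1, one_mem_chainLengths hp⟩ (chainLengths_bddAbove _)

theorem longestChain_eq_zero_of_length_lt {t : ℕ} (ht : a.length < t) :
    longestChain r a t = 0 := by
  refine Nat.le_zero.mp (longestChain_le ?_)
  rintro _ ⟨s, -, rfl, hlast, -⟩
  rw [List.getElem?_eq_none (by omega), List.getLast?_eq_none_iff] at hlast
  simp [hlast]

theorem List.Nodup.sublist_take_of_append_sublist (hnd : a.Nodup) {s : List α} {p : ℕ}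
    (hp : p < a.length) (hs : (s ++ [a[p]]).Sublist a) : s.Sublist (a.take p) := by
  obtain ⟨a₁, a₂, rfl, hs₁, hp₂⟩ := List.append_sublist_iff.mp hs
  have hlen : a₁.length ≤ p := by
    by_contra! hlt
    rw [List.getElem_append_left hlt] at hp₂
    exact List.disjoint_of_nodup_append hnd (List.getElem_mem hlt)
      (List.singleton_sublist.mp hp₂)
  rw [List.take_append, List.take_of_length_le hlen]
  exact hs₁.trans (List.sublist_append_left _ _)

theorem length_mem_chainLengths (hnd : a.Nodup) {s : List α} {p : ℕ} (hp : p < a.length)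
    (hs : (s ++ [a[p]]).Sublist a) (hsort : (s ++ [a[p]]).Pairwise r) :
    s.length + 1 ∈ chainLengths r a (p + 1) := by
  refine ⟨s ++ [a[p]], ?_, by simp, by simp [hp], hsort⟩
  rw [List.take_succ_eq_append_getElem hp]
  exact (hnd.sublist_take_of_append_sublist hp hs).append_right _

theorem longestChain_lt_of_lt [IsTrans α r] {p q : ℕ} (hpq : p < q) (hq : q < a.length)
    (hr : r a[p] a[q]) : longestChain r a (p + 1) < longestChain r a (q + 1) := by
  obtain ⟨w, hw, hlen, hlast, hsort⟩ := longestChain_mem (r := r) (hpq.trans hq)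
  rw [Nat.add_sub_cancel, List.getElem?_eq_getElem (hpq.trans hq)] at hlast
  obtain ⟨w', rfl⟩ := List.getLast?_eq_some_iff.mp hlast
  have hchain : (w' ++ [a[p]] ++ [a[q]]).Pairwise r := by
    refine List.pairwise_append.mpr ⟨hsort, List.pairwise_singleton _ _, ?_⟩
    simp only [List.mem_append, List.mem_singleton, forall_eq]
    rintro x (hx | rfl)
    · exact _root_.trans ((List.pairwise_append.mp hsort).2.2 x hx _ (by simp)) hr
    · exact hr
  have hmem : (w' ++ [a[p]] ++ [a[q]]).length ∈ chainLengths r a (q + 1) := by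
    refine ⟨_, ?_, rfl, by simp [hq], hchain⟩
    rw [List.take_succ_eq_append_getElem hq]
    exact (hw.trans (List.take_sublist_take_left hpq)).append_right _
  have := le_longestChain hmem
  simp only [List.length_append, List.length_singleton] at this hlen
  omega

theorem exists_lt_longestChain_le_succ [Std.Irrefl r] (hnd : a.Nodup) {q : ℕ}
    (hq : q < a.length) (h : 2 ≤ longestChain r a (q + 1)) :
    ∃ p, ∃ hpq : p < q, r (a[p]'(hpq.trans hq)) a[q] ∧
      longestChain r a (q + 1) ≤ longestChain r a (p + 1) + 1 := by
  obtain ⟨w, hw, hlen, hlast, hsort⟩ := longestChain_mem (r := r) hq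
  rw [Nat.add_sub_cancel, List.getElem?_eq_getElem hq] at hlast
  obtain ⟨w', rfl⟩ := List.getLast?_eq_some_iff.mp hlast
  obtain rfl | ⟨s, y, rfl⟩ := w'.eq_nil_or_concat
  · simp only [List.nil_append, List.length_singleton] at hlen
    omega
  rw [List.concat_eq_append] at hw hsort hlen
  have hry : r y a[q] := (List.pairwise_append.mp hsort).2.2 y (by simp) _ (by simp)
  obtain ⟨p, hp, rfl⟩ := List.getElem_of_mem (hw.subset (by simp : y ∈ s ++ [y] ++ [a[q]]))
  rw [List.length_take] at hp
  have hpq : p < q := by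
    refine lt_of_le_of_ne (by omega) fun hpq => ?_
    subst hpq
    exact irrefl _ (by simpa using hry)
  have hpa : p < a.length := hpq.trans hq
  simp only [List.getElem_take] at hry hw hsort ⊢
  have hs : (s ++ [a[p]]).Sublist a :=
    (List.sublist_append_left _ _).trans (hw.trans (List.take_sublist _ _))
  refine ⟨p, hpq, hry, ?_⟩
  have := le_longestChain
    (length_mem_chainLengths hnd hpa hs (hsort.sublist (List.sublist_append_left _ _)))
  simp only [List.length_append, List.length_singleton] at hlen
  omega

theorem not_exists_sublist_iff (hnd : a.Nodup) {m : ℕ} :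
    (¬ ∃ s : List α, s.Sublist a ∧ s.length = m + 1 ∧ s.Pairwise r) ↔
      ∀ p < a.length, longestChain r a (p + 1) ≤ m := by
  constructor
  · refine fun h p _ => longestChain_le ?_
    rintro _ ⟨s, hs, rfl, -, hsort⟩
    by_contra! hlong
    exact h ⟨s.take (m + 1), ((List.take_sublist _ _).trans hs).trans (List.take_sublist _ _),
      by rw [List.length_take]; omega, hsort.sublist (List.take_sublist _ _)⟩
  · rintro h ⟨s, hs, hlen, hsort⟩
    obtain ⟨s, x, rfl⟩ := (s.eq_nil_or_concat).resolve_left (by rintro rfl; simp at hlen)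
    rw [List.concat_eq_append] at hs hsort hlen
    obtain ⟨p, hp, rfl⟩ := List.getElem_of_mem (hs.subset (by simp : x ∈ s ++ [x]))
    have := le_longestChain (length_mem_chainLengths hnd hp hs hsort)
    have := h p hp
    simp only [List.length_append, List.length_singleton] at hlen
    omega

theorem longestChain_eq_of_labelling [IsTrans α r] [Std.Irrefl r] (hnd : a.Nodup)
    {ι : Type*} (pos : ι → ℕ) (val : ι → α) (f : ι → ℕ)
    (hval : ∀ c, a[pos c]? = some (val c)) (hcover : ∀ p < a.length, ∃ c, pos c = p)
    (hlt : ∀ c d, pos c < pos d → r (val c) (val d) → f c < f d)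
    (hpred : ∀ c, 0 < f c → ∃ d, pos d < pos c ∧ r (val d) (val c) ∧ f d + 1 = f c)
    (c : ι) : longestChain r a (pos c + 1) = f c + 1 := by
  have hpos c : pos c < a.length := (List.getElem?_eq_some_iff.mp (hval c)).1
  have hget c : a[pos c]'(hpos c) = val c := (List.getElem?_eq_some_iff.mp (hval c)).2
  have hge : ∀ n c, f c = n → n + 1 ≤ longestChain r a (pos c + 1) := by
    intro n
    induction n with
    | zero => exact fun c _ => one_le_longestChain (hpos c)
    | succ n ih =>
      intro c hc
      obtain ⟨d, hdc, hr, hfd⟩ := hpred c (by omega)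
      have := longestChain_lt_of_lt hdc (hpos c) (by rw [hget, hget]; exact hr)
      have := ih d (by omega)
      omega
  have hle : ∀ p c, pos c = p → longestChain r a (pos c + 1) ≤ f c + 1 := by
    intro p
    induction p using Nat.strong_induction_on with
    | _ p ih =>
      rintro c rfl
      by_contra! hlong
      obtain ⟨q, hqc, hr, hstep⟩ :=
        exists_lt_longestChain_le_succ hnd (hpos c) (r := r) (by omega)
      obtain ⟨d, rfl⟩ := hcover q (hqc.trans (hpos c))
      have := ih _ hqc d rfl
      have := hlt d c hqc (by rw [← hget, ← hget]; exact hr)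
      omega
  exact le_antisymm (hle _ c rfl) (hge _ c rfl)

end LongestChain

section GridFunctions

variable {a : List ℕ}

theorem gridI_eq_longestChain (t : ℕ) : gridI a t = longestChain (· > ·) a t := rfl

theorem getElem_lt_and_gridJ_lt_of_gridI_eq (hnd : a.Nodup) {p q : ℕ} (hpq : p < q)
    (hq : q < a.length) (h : gridI a (p + 1) = gridI a (q + 1)) :
    a[p]'(hpq.trans hq) < a[q] ∧ gridJ a (p + 1) < gridJ a (q + 1) := by
  have hne : a[p]'(hpq.trans hq) ≠ a[q] := by simp [hnd.getElem_inj_iff, hpq.ne]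
  have hlt : a[p]'(hpq.trans hq) < a[q] := by
    refine lt_of_le_of_ne (not_lt.mp fun hgt => ?_) hne
    exact (longestChain_lt_of_lt (r := (· > ·)) hpq hq hgt).ne h
  exact ⟨hlt, longestChain_lt_of_lt hpq hq hlt⟩

theorem getElem_lt_and_gridI_lt_of_gridJ_eq (hnd : a.Nodup) {p q : ℕ} (hpq : p < q)
    (hq : q < a.length) (h : gridJ a (p + 1) = gridJ a (q + 1)) :
    a[q] < a[p]'(hpq.trans hq) ∧ gridI a (p + 1) < gridI a (q + 1) := by
  have hne : a[q] ≠ a[p]'(hpq.trans hq) := by simp [hnd.getElem_inj_iff, hpq.ne']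
  have hlt : a[q] < a[p]'(hpq.trans hq) := by
    refine lt_of_le_of_ne (not_lt.mp fun hgt => ?_) hne
    exact (longestChain_lt_of_lt (r := (· < ·)) hpq hq hgt).ne h
  exact ⟨hlt, longestChain_lt_of_lt (r := (· > ·)) hpq hq hlt⟩

theorem lt_of_gridI_eq_of_gridJ_lt (hnd : a.Nodup) {p q : ℕ} (hp : p < a.length)
    (hI : gridI a (p + 1) = gridI a (q + 1)) (hJ : gridJ a (p + 1) < gridJ a (q + 1)) : p < q := by
  by_contra! hqp
  obtain rfl | hqp := hqp.eq_or_lt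
  · exact hJ.false
  · exact (getElem_lt_and_gridJ_lt_of_gridI_eq hnd hqp hp hI.symm).2.asymm hJ

theorem lt_of_gridJ_eq_of_gridI_lt (hnd : a.Nodup) {p q : ℕ} (hp : p < a.length)
    (hJ : gridJ a (p + 1) = gridJ a (q + 1)) (hI : gridI a (p + 1) < gridI a (q + 1)) : p < q := by
  by_contra! hqp
  obtain rfl | hqp := hqp.eq_or_lt
  · exact hI.false
  · exact (getElem_lt_and_gridI_lt_of_gridJ_eq hnd hqp hp hJ.symm).2.asymm hI

theorem eq_of_gridI_eq_of_gridJ_eq_s13 (hnd : a.Nodup) {p q : ℕ} (hp : p < a.length)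
    (hq : q < a.length) (hI : gridI a (p + 1) = gridI a (q + 1))
    (hJ : gridJ a (p + 1) = gridJ a (q + 1)) : p = q := by
  by_contra hpq
  obtain hpq | hqp := Nat.lt_or_gt_of_ne hpq
  · exact (getElem_lt_and_gridJ_lt_of_gridI_eq hnd hpq hq hI).2.ne hJ
  · exact (getElem_lt_and_gridJ_lt_of_gridI_eq hnd hqp hp hI.symm).2.ne hJ.symm

theorem gridInv_eq (hnd : a.Nodup) {p : ℕ} (hp : p < a.length) :
    gridInv a (gridI a (p + 1)) (gridJ a (p + 1)) = p + 1 := by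
  obtain ⟨ht, hI, hJ⟩ : gridInv a (gridI a (p + 1)) (gridJ a (p + 1)) ∈
      {t | 1 ≤ t ∧ gridI a t = gridI a (p + 1) ∧ gridJ a t = gridJ a (p + 1)} :=
    Nat.sInf_mem ⟨p + 1, by omega, rfl, rfl⟩
  generalize gridInv a _ _ = t at ht hI hJ ⊢
  obtain ⟨u, rfl⟩ : ∃ u, t = u + 1 := ⟨t - 1, by omega⟩
  have hu : u < a.length := by
    by_contra! hlen
    have := one_le_longestChain (r := (· > ·)) hp
    rw [← gridI_eq_longestChain, ← hI, gridI_eq_longestChain,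
      longestChain_eq_zero_of_length_lt (by omega)] at this
    omega
  rw [eq_of_gridI_eq_of_gridJ_eq_s13 hnd hu hp hI hJ]

end GridFunctions

theorem gridValuation_rev {ℓ k : ℕ} (a : List ℕ) (i : Fin ℓ) (j : Fin k) :
    gridValuation ℓ k a i.rev j = a.getD (gridRanking ℓ k a i j - 1) 0 := by
  have hi : ℓ - (ℓ - (i.1 + 1)) = i.1 + 1 := by omega
  simp [gridValuation, gridRanking, Fin.val_rev, hi]

namespace PermSet

variable {k ℓ : ℕ} {a : List ℕ}

theorem length_eq (ha : a ∈ PermSet k ℓ) : a.length = k * ℓ := by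
  simpa using ha.1.length_eq

theorem nodup (ha : a ∈ PermSet k ℓ) : a.Nodup :=
  ha.1.nodup_iff.mpr List.nodup_range'

theorem mem_iff (ha : a ∈ PermSet k ℓ) {x : ℕ} : x ∈ a ↔ 1 ≤ x ∧ x ≤ k * ℓ := by
  rw [ha.1.mem_iff, List.mem_range'_1]
  omega

theorem exists_cell (ha : a ∈ PermSet k ℓ) {p : ℕ} (hp : p < a.length) :
    ∃ (i : Fin ℓ) (j : Fin k), gridI a (p + 1) = i + 1 ∧ gridJ a (p + 1) = j + 1 := by
  have hI₁ : 1 ≤ gridI a (p + 1) := one_le_longestChain hp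
  have hJ₁ : 1 ≤ gridJ a (p + 1) := one_le_longestChain hp
  have hIℓ : gridI a (p + 1) ≤ ℓ := (not_exists_sublist_iff (nodup ha)).mp ha.2.2 p hp
  have hJk : gridJ a (p + 1) ≤ k := (not_exists_sublist_iff (nodup ha)).mp ha.2.1 p hp
  exact ⟨⟨gridI a (p + 1) - 1, by omega⟩, ⟨gridJ a (p + 1) - 1, by omega⟩,
    by dsimp only; omega, by dsimp only; omega⟩

/-- The `k * ℓ` positions are mapped injectively into the `ℓ × k` cells, hence onto them. -/
theorem exists_position (ha : a ∈ PermSet k ℓ) (i : Fin ℓ) (j : Fin k) :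
    ∃ p < a.length, gridI a (p + 1) = i + 1 ∧ gridJ a (p + 1) = j + 1 := by
  have hsurj := Finset.surj_on_of_inj_on_of_card_le (s := Finset.range a.length)
    (t := Finset.Icc 1 ℓ ×ˢ Finset.Icc 1 k) (fun p _ => (gridI a (p + 1), gridJ a (p + 1)))
    (fun p hp => by
      obtain ⟨i, j, hI, hJ⟩ := exists_cell ha (Finset.mem_range.mp hp)
      simp only [Finset.mem_product, Finset.mem_Icc, hI, hJ]
      omega)
    (fun p q hp hq h => eq_of_gridI_eq_of_gridJ_eq_s13 (nodup ha) (Finset.mem_range.mp hp)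
      (Finset.mem_range.mp hq) (congrArg Prod.fst h) (congrArg Prod.snd h))
    (by simp [length_eq ha, mul_comm])
  obtain ⟨p, hp, h⟩ := hsurj (i + 1, j + 1)
    (by simp only [Finset.mem_product, Finset.mem_Icc]; omega)
  simp only [Prod.mk.injEq] at h
  exact ⟨p, Finset.mem_range.mp hp, h.1.symm, h.2.symm⟩

theorem gridRanking_eq (ha : a ∈ PermSet k ℓ) {p : ℕ} (hp : p < a.length) {i : Fin ℓ}
    {j : Fin k} (hI : gridI a (p + 1) = i + 1) (hJ : gridJ a (p + 1) = j + 1) :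
    gridRanking ℓ k a i j = p + 1 := by
  simp [gridRanking, ← hI, ← hJ, gridInv_eq (nodup ha) hp]

theorem exists_gridRanking_eq (ha : a ∈ PermSet k ℓ) (i : Fin ℓ) (j : Fin k) :
    ∃ p < a.length, gridRanking ℓ k a i j = p + 1 ∧
      gridI a (p + 1) = i + 1 ∧ gridJ a (p + 1) = j + 1 := by
  obtain ⟨p, hp, hI, hJ⟩ := exists_position ha i j
  exact ⟨p, hp, gridRanking_eq ha hp hI hJ, hI, hJ⟩

theorem exists_gridValuation_eq (ha : a ∈ PermSet k ℓ) (i : Fin ℓ) (j : Fin k) :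
    ∃ p, ∃ hp : p < a.length, gridValuation ℓ k a i j = a[p] ∧
      gridI a (p + 1) = i.rev + 1 ∧ gridJ a (p + 1) = j + 1 := by
  obtain ⟨p, hp, hR, hI, hJ⟩ := exists_gridRanking_eq ha i.rev j
  refine ⟨p, hp, ?_, hI, hJ⟩
  rw [← Fin.rev_rev i, gridValuation_rev, hR]
  simp [hp]

theorem gridRanking_mem_YSet (ha : a ∈ PermSet k ℓ) : gridRanking ℓ k a ∈ YSet ℓ k := by
  have hnd := nodup ha
  refine ⟨⟨?_, ?_, ?_⟩, fun i j j' hjj' => ?_, fun j i i' hii' => ?_⟩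
  · rintro ⟨i, j⟩ -
    obtain ⟨p, hp, hR, -, -⟩ := exists_gridRanking_eq ha i j
    rw [length_eq ha] at hp
    simp only [hR, Finset.coe_Icc, Set.mem_Icc]
    omega
  · rintro ⟨i, j⟩ - ⟨i', j'⟩ - h
    obtain ⟨p, hp, hR, hI, hJ⟩ := exists_gridRanking_eq ha i j
    obtain ⟨p', hp', hR', hI', hJ'⟩ := exists_gridRanking_eq ha i' j'
    obtain rfl : p = p' := by simpa [hR, hR'] using h
    ext <;> simp only <;> omega
  · intro t ht
    simp only [Finset.coe_Icc, Set.mem_Icc] at ht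
    have hp : t - 1 < a.length := by rw [length_eq ha]; omega
    obtain ⟨i, j, hI, hJ⟩ := exists_cell ha hp
    exact ⟨(i, j), trivial, (gridRanking_eq ha hp hI hJ).trans (by omega)⟩
  · obtain ⟨p, hp, hR, hI, hJ⟩ := exists_gridRanking_eq ha i j
    obtain ⟨p', hp', hR', hI', hJ'⟩ := exists_gridRanking_eq ha i j'
    have := lt_of_gridI_eq_of_gridJ_lt hnd hp (hI.trans hI'.symm)
      (by rw [hJ, hJ']; simpa using hjj')
    rw [hR, hR']
    omega
  · obtain ⟨p, hp, hR, hI, hJ⟩ := exists_gridRanking_eq ha i j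
    obtain ⟨p', hp', hR', hI', hJ'⟩ := exists_gridRanking_eq ha i' j
    have := lt_of_gridJ_eq_of_gridI_lt hnd hp (hJ.trans hJ'.symm)
      (by rw [hI, hI']; simpa using hii')
    simp only [hR, hR']
    omega

theorem gridValuation_mem_YSet (ha : a ∈ PermSet k ℓ) :
    gridValuation ℓ k a ∈ YSet ℓ k := by
  have hnd := nodup ha
  refine ⟨⟨?_, ?_, ?_⟩, fun i j j' hjj' => ?_, fun j i i' hii' => ?_⟩
  · rintro ⟨i, j⟩ -
    obtain ⟨p, hp, hV, -, -⟩ := exists_gridValuation_eq ha i j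
    simpa [hV] using (mem_iff ha).mp (List.getElem_mem hp)
  · rintro ⟨i, j⟩ - ⟨i', j'⟩ - h
    obtain ⟨p, hp, hV, hI, hJ⟩ := exists_gridValuation_eq ha i j
    obtain ⟨p', hp', hV', hI', hJ'⟩ := exists_gridValuation_eq ha i' j'
    obtain rfl : p = p' := hnd.getElem_inj_iff.mp (by simpa [hV, hV'] using h)
    have hii' : i.rev = i'.rev := by ext; omega
    exact Prod.ext (Fin.rev_inj.mp hii') (Fin.ext (show j.1 = j'.1 by omega))
  · intro v hv
    obtain ⟨p, hp, rfl⟩ := List.getElem_of_mem ((mem_iff ha).mpr (by simpa using hv))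
    obtain ⟨i, j, hI, hJ⟩ := exists_cell ha hp
    exact ⟨(i.rev, j), trivial, by simp [gridValuation_rev, gridRanking_eq ha hp hI hJ, hp]⟩
  · obtain ⟨p, hp, hV, hI, hJ⟩ := exists_gridValuation_eq ha i j
    obtain ⟨p', hp', hV', hI', hJ'⟩ := exists_gridValuation_eq ha i j'
    have hpp' := lt_of_gridI_eq_of_gridJ_lt hnd hp (hI.trans hI'.symm)
      (by rw [hJ, hJ']; simpa using hjj')
    simpa [hV, hV'] using (getElem_lt_and_gridJ_lt_of_gridI_eq hnd hpp' hp' (hI.trans hI'.symm)).1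
  · obtain ⟨p, hp, hV, hI, hJ⟩ := exists_gridValuation_eq ha i j
    obtain ⟨p', hp', hV', hI', hJ'⟩ := exists_gridValuation_eq ha i' j
    have hp'p := lt_of_gridJ_eq_of_gridI_lt hnd hp' (hJ'.trans hJ.symm)
      (by rw [hI, hI']; exact Nat.add_lt_add_right (Fin.rev_lt_rev.mpr hii') 1)
    simpa [hV, hV'] using (getElem_lt_and_gridI_lt_of_gridJ_eq hnd hp'p hp (hJ'.trans hJ.symm)).1

end PermSet

theorem injOn_gridRanking_gridValuation {k ℓ : ℕ} :
    Set.InjOn (fun a => (gridRanking ℓ k a, gridValuation ℓ k a)) (PermSet k ℓ) := by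
  intro a ha b hb h
  simp only [Prod.mk.injEq] at h
  refine List.ext_getElem (by rw [PermSet.length_eq ha, PermSet.length_eq hb]) fun p hp hpb => ?_
  obtain ⟨i, j, hI, hJ⟩ := PermSet.exists_cell ha hp
  have hRa := PermSet.gridRanking_eq ha hp hI hJ
  have hRb : gridRanking ℓ k b i j = p + 1 := h.1 ▸ hRa
  have hV := congrFun (congrFun h.2 i.rev) j
  rw [gridValuation_rev, gridValuation_rev, hRa, hRb] at hV
  simpa [hp, hpb] using hV

def IsIncreasingTableau {ℓ k : ℕ} {α : Type*} [Preorder α] (M : Matrix (Fin ℓ) (Fin k) α) :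
    Prop :=
  (∀ i, StrictMono (M i)) ∧ ∀ j, StrictMono fun i => M i j

namespace IsIncreasingTableau

variable {ℓ k : ℕ} {α β : Type*} [LinearOrder α] [LinearOrder β]
  {P : Matrix (Fin ℓ) (Fin k) α} {Q : Matrix (Fin ℓ) (Fin k) β}
  {i i' : Fin ℓ} {j j' : Fin k}

theorem col_lt_of_lt (hP : IsIncreasingTableau P) (hQ : IsIncreasingTableau Q)
    (hPlt : P i j < P i' j') (hQlt : Q i.rev j < Q i'.rev j') : j < j' := by
  by_contra! hj
  have hi : i < i' := (hP.2 j').lt_iff_lt.mp (((hP.1 i).monotone hj).trans_lt hPlt)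
  have hQ₁ : Q i'.rev j' < Q i.rev j' := hQ.2 j' (Fin.rev_lt_rev.mpr hi)
  have hQ₂ : Q i.rev j' ≤ Q i.rev j := (hQ.1 _).monotone hj
  exact (hQlt.trans (hQ₁.trans_le hQ₂)).false

theorem row_lt_of_lt (hP : IsIncreasingTableau P) (hQ : IsIncreasingTableau Q)
    (hPlt : P i j < P i' j') (hQlt : Q i'.rev j' < Q i.rev j) : i < i' := by
  by_contra! hi
  have hj : j < j' := by
    by_contra! hj
    exact (hPlt.trans_le (((hP.2 j').monotone hi).trans ((hP.1 i).monotone hj))).false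
  have hQ₁ : Q i.rev j ≤ Q i'.rev j := (hQ.2 j).monotone (Fin.rev_le_rev.mpr hi)
  exact ((hQlt.trans_le hQ₁).trans (hQ.1 _ hj)).false

end IsIncreasingTableau

namespace YSet

variable {ℓ k : ℕ} {P : Matrix (Fin ℓ) (Fin k) ℕ}

theorem mem_Icc (hP : P ∈ YSet ℓ k) (i : Fin ℓ) (j : Fin k) :
    P i j ∈ Set.Icc 1 (k * ℓ) := by
  simpa using hP.1.mapsTo (Set.mem_univ (i, j))

theorem eq_of_eq (hP : P ∈ YSet ℓ k) {c d : Fin ℓ × Fin k} (h : P c.1 c.2 = P d.1 d.2) :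
    c = d :=
  hP.1.injOn trivial trivial h

theorem exists_eq (hP : P ∈ YSet ℓ k) {v : ℕ} (hv : v ∈ Set.Icc 1 (k * ℓ)) :
    ∃ i j, P i j = v := by
  obtain ⟨⟨i, j⟩, -, h⟩ := hP.1.surjOn (by simpa using hv)
  exact ⟨i, j, h⟩

end YSet

section WordOfTableaux

variable {ℓ k : ℕ} {P Q : Matrix (Fin ℓ) (Fin k) ℕ}

/-- Position `P i j` (1-based) receives `Q i.rev j`; the `0` branch is never taken when
`P ∈ YSet ℓ k`. -/
noncomputable def wordOfTableaux (P Q : Matrix (Fin ℓ) (Fin k) ℕ) : List ℕ :=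
  (List.range (k * ℓ)).map fun p =>
    if h : ∃ c : Fin ℓ × Fin k, P c.1 c.2 = p + 1 then Q h.choose.1.rev h.choose.2 else 0

theorem length_wordOfTableaux : (wordOfTableaux P Q).length = k * ℓ := by
  simp [wordOfTableaux]

theorem wordOfTableaux_getElem? (hP : P ∈ YSet ℓ k) (i : Fin ℓ) (j : Fin k) :
    (wordOfTableaux P Q)[P i j - 1]? = some (Q i.rev j) := by
  obtain ⟨h₁, h₂⟩ := YSet.mem_Icc hP i j
  have hex : ∃ c : Fin ℓ × Fin k, P c.1 c.2 = P i j - 1 + 1 :=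
    ⟨(i, j), show P i j = P i j - 1 + 1 by omega⟩
  have hc : hex.choose = (i, j) :=
    YSet.eq_of_eq hP (hex.choose_spec.trans (show P i j - 1 + 1 = P i j by omega))
  rw [wordOfTableaux, List.getElem?_map, List.getElem?_range (by omega), Option.map_some,
    dif_pos hex, hc]

theorem exists_eq_of_lt_length_wordOfTableaux (hP : P ∈ YSet ℓ k) {p : ℕ}
    (hp : p < (wordOfTableaux P Q).length) : ∃ i j, P i j - 1 = p := by
  rw [length_wordOfTableaux] at hp
  obtain ⟨i, j, h⟩ := YSet.exists_eq hP (v := p + 1) ⟨by omega, by omega⟩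
  exact ⟨i, j, by omega⟩

theorem nodup_wordOfTableaux (hP : P ∈ YSet ℓ k) (hQ : Q ∈ YSet ℓ k) :
    (wordOfTableaux P Q).Nodup := by
  refine List.nodup_iff_getElem?_ne_getElem?.mpr fun p q hpq hq heq => hpq.ne ?_
  obtain ⟨i, j, rfl⟩ := exists_eq_of_lt_length_wordOfTableaux hP (hpq.trans hq)
  obtain ⟨i', j', rfl⟩ := exists_eq_of_lt_length_wordOfTableaux hP hq
  rw [wordOfTableaux_getElem? hP, wordOfTableaux_getElem? hP, Option.some_inj] at heq
  obtain ⟨hi, rfl⟩ := Prod.mk.inj (YSet.eq_of_eq hQ (c := (i.rev, j)) (d := (i'.rev, j')) heq)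
  rw [Fin.rev_inj.mp hi]

theorem mem_wordOfTableaux (hP : P ∈ YSet ℓ k) (hQ : Q ∈ YSet ℓ k) {x : ℕ} :
    x ∈ wordOfTableaux P Q ↔ x ∈ Set.Icc 1 (k * ℓ) := by
  constructor
  · intro hx
    obtain ⟨p, hpx⟩ := List.mem_iff_getElem?.mp hx
    obtain ⟨i, j, rfl⟩ :=
      exists_eq_of_lt_length_wordOfTableaux hP (List.getElem?_eq_some_iff.mp hpx).1
    rw [wordOfTableaux_getElem? hP, Option.some_inj] at hpx
    exact hpx ▸ YSet.mem_Icc hQ _ _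
  · intro hx
    obtain ⟨i, j, rfl⟩ := YSet.exists_eq hQ hx
    exact List.mem_of_getElem? (by simpa using wordOfTableaux_getElem? (Q := Q) hP i.rev j)

theorem longestChain_wordOfTableaux {r : ℕ → ℕ → Prop} [IsTrans ℕ r] [Std.Irrefl r]
    (hP : P ∈ YSet ℓ k) (hQ : Q ∈ YSet ℓ k) (f : Fin ℓ × Fin k → ℕ)
    (hlt : ∀ c d, P c.1 c.2 < P d.1 d.2 → r (Q c.1.rev c.2) (Q d.1.rev d.2) → f c < f d)
    (hpred : ∀ c, 0 < f c → ∃ d, P d.1 d.2 < P c.1 c.2 ∧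
      r (Q d.1.rev d.2) (Q c.1.rev c.2) ∧ f d + 1 = f c)
    (i : Fin ℓ) (j : Fin k) : longestChain r (wordOfTableaux P Q) (P i j) = f (i, j) + 1 := by
  have hpos (c : Fin ℓ × Fin k) : 1 ≤ P c.1 c.2 := (YSet.mem_Icc hP c.1 c.2).1
  have h := longestChain_eq_of_labelling (nodup_wordOfTableaux hP hQ)
    (fun c => P c.1 c.2 - 1) (fun c => Q c.1.rev c.2) f
    (fun c => wordOfTableaux_getElem? hP c.1 c.2)
    (fun p hp => by
      obtain ⟨i, j, h⟩ := exists_eq_of_lt_length_wordOfTableaux hP hp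
      exact ⟨(i, j), h⟩)
    (fun c d hcd => hlt c d (by have := hpos c; omega))
    (fun c hc => by
      obtain ⟨d, hdc, hr, hfd⟩ := hpred c hc
      exact ⟨d, by have := hpos d; omega, hr, hfd⟩)
    (i, j)
  rwa [Nat.sub_add_cancel (hpos (i, j))] at h

theorem gridJ_wordOfTableaux (hP : P ∈ YSet ℓ k) (hQ : Q ∈ YSet ℓ k) (i : Fin ℓ)
    (j : Fin k) :
    gridJ (wordOfTableaux P Q) (P i j) = j + 1 :=
  longestChain_wordOfTableaux hP hQ (fun c => c.2)
    (fun c d => IsIncreasingTableau.col_lt_of_lt hP.2 hQ.2)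
    (fun c hc => by
      have hlt : (⟨c.2 - 1, by omega⟩ : Fin k) < c.2 := Fin.lt_def.mpr (by dsimp only; omega)
      exact ⟨(c.1, ⟨c.2 - 1, by omega⟩), hP.2.1 c.1 hlt, hQ.2.1 _ hlt,
        by dsimp only; omega⟩)
    i j

theorem gridI_wordOfTableaux (hP : P ∈ YSet ℓ k) (hQ : Q ∈ YSet ℓ k) (i : Fin ℓ)
    (j : Fin k) :
    gridI (wordOfTableaux P Q) (P i j) = i + 1 :=
  longestChain_wordOfTableaux hP hQ (fun c => c.1)
    (fun c d => IsIncreasingTableau.row_lt_of_lt hP.2 hQ.2)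
    (fun c hc => by
      have hlt : (⟨c.1 - 1, by omega⟩ : Fin ℓ) < c.1 := Fin.lt_def.mpr (by dsimp only; omega)
      exact ⟨(⟨c.1 - 1, by omega⟩, c.2), hP.2.2 c.2 hlt, hQ.2.2 c.2 (Fin.rev_lt_rev.mpr hlt),
        by dsimp only; omega⟩)
    i j

theorem wordOfTableaux_mem_PermSet (hP : P ∈ YSet ℓ k) (hQ : Q ∈ YSet ℓ k) :
    wordOfTableaux P Q ∈ PermSet k ℓ := by
  have hnd := nodup_wordOfTableaux hP hQ
  refine ⟨(List.perm_ext_iff_of_nodup hnd List.nodup_range').mpr fun x => ?_,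
    (not_exists_sublist_iff hnd).mpr fun p hp => ?_,
    (not_exists_sublist_iff hnd).mpr fun p hp => ?_⟩
  · rw [mem_wordOfTableaux hP hQ, List.mem_range'_1, Set.mem_Icc]
    omega
  all_goals
    obtain ⟨i, j, rfl⟩ := exists_eq_of_lt_length_wordOfTableaux hP hp
    rw [Nat.sub_add_cancel (YSet.mem_Icc hP i j).1]
  · exact (gridJ_wordOfTableaux hP hQ i j).trans_le j.2
  · exact (gridI_wordOfTableaux hP hQ i j).trans_le i.2

theorem gridRanking_wordOfTableaux (hP : P ∈ YSet ℓ k) (hQ : Q ∈ YSet ℓ k) :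
    gridRanking ℓ k (wordOfTableaux P Q) = P := by
  ext i j
  have hp : P i j - 1 < (wordOfTableaux P Q).length := by
    have := YSet.mem_Icc hP i j
    rw [length_wordOfTableaux, Set.mem_Icc] at *
    omega
  have h := gridInv_eq (nodup_wordOfTableaux hP hQ) hp
  rw [Nat.sub_add_cancel (YSet.mem_Icc hP i j).1, gridI_wordOfTableaux hP hQ,
    gridJ_wordOfTableaux hP hQ] at h
  exact h

theorem gridValuation_wordOfTableaux (hP : P ∈ YSet ℓ k) (hQ : Q ∈ YSet ℓ k) :
    gridValuation ℓ k (wordOfTableaux P Q) = Q := by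
  ext i j
  rw [← Fin.rev_rev i, gridValuation_rev, gridRanking_wordOfTableaux hP hQ,
    List.getD_eq_getElem?_getD, wordOfTableaux_getElem? hP, Option.getD_some]

end WordOfTableaux

theorem phi_bijection (k ℓ : ℕ) :
    Set.BijOn (fun a => (gridRanking ℓ k a, gridValuation ℓ k a))
      (PermSet k ℓ) (YSet ℓ k ×ˢ YSet ℓ k) := by
  refine ⟨fun a ha => ⟨PermSet.gridRanking_mem_YSet ha, PermSet.gridValuation_mem_YSet ha⟩,
    injOn_gridRanking_gridValuation, ?_⟩
  rintro ⟨P, Q⟩ ⟨hP, hQ⟩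
  exact ⟨wordOfTableaux P Q, wordOfTableaux_mem_PermSet hP hQ,
    Prod.ext (gridRanking_wordOfTableaux hP hQ) (gridValuation_wordOfTableaux hP hQ)⟩
end

section
/- For min(k,ℓ) ≤ 2 and k,ℓ ≥ 1, there is exactly one cyclic permutation of {1,...,(k-1)(ℓ-1)+1} with no increasing cyclic sub-permutation of length k+1 and no decreasing cyclic sub-permutation of length ℓ+1; it is the decreasing cyclic permutation when k ≤ 2 and the increasing cyclic permutation when k ≥ 3. -/
/-!
Rotating the maximum to the front, a cyclic permutation `a :: t` with no increasing cyclic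
sub-permutation of length 3 must have `t` decreasing: an ascent `x < y` in `t` would give
the increasing triple `x, y, a` in the rotation `t ++ [a]`. Conversely a rotation of a
decreasing list is the concatenation of two decreasing lists, so it meets an increasing list
in at most two entries. For `k ≤ 2` the permutation has at most `ℓ` entries, so the
decreasing condition is void and the statement is this characterisation (for `k = 1` there
is a single entry). The case `ℓ ≤ 2` is the mirror image under reversing the cycle.
-/

open List

theorem incCycSub_iff_exists_isRotated {c : List ℕ} {m : ℕ} :
    IncCycSub c m ↔ ∃ d, c ~r d ∧ ∃ s, s <+ d ∧ s.length = m ∧ s.Pairwise (· < ·) :=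
  ⟨fun ⟨r, hr⟩ => ⟨_, ⟨r, rfl⟩, hr⟩, fun ⟨_, ⟨r, hr⟩, hs⟩ => ⟨r, hr ▸ hs⟩⟩

theorem decCycSub_iff_exists_isRotated {c : List ℕ} {m : ℕ} :
    DecCycSub c m ↔ ∃ d, c ~r d ∧ ∃ s, s <+ d ∧ s.length = m ∧ s.Pairwise (· > ·) :=
  ⟨fun ⟨r, hr⟩ => ⟨_, ⟨r, rfl⟩, hr⟩, fun ⟨_, ⟨r, hr⟩, hs⟩ => ⟨r, hr ▸ hs⟩⟩

theorem List.IsRotated.incCycSub_iff {c d : List ℕ} (h : c ~r d) {m : ℕ} :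
    IncCycSub c m ↔ IncCycSub d m := by
  simp only [incCycSub_iff_exists_isRotated]
  exact ⟨fun ⟨e, hce, he⟩ => ⟨e, h.symm.trans hce, he⟩,
    fun ⟨e, hde, he⟩ => ⟨e, h.trans hde, he⟩⟩

theorem decCycSub_iff_incCycSub_reverse {c : List ℕ} {m : ℕ} :
    DecCycSub c m ↔ IncCycSub c.reverse m := by
  simp only [incCycSub_iff_exists_isRotated, decCycSub_iff_exists_isRotated]
  constructor
  · rintro ⟨d, hcd, s, hs, hlen, hdec⟩
    exact ⟨d.reverse, hcd.reverse, s.reverse, hs.reverse, by simpa, pairwise_reverse.2 hdec⟩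
  · rintro ⟨d, hcd, s, hs, hlen, hinc⟩
    refine ⟨d.reverse, ?_, s.reverse, hs.reverse, by simpa, pairwise_reverse.2 hinc⟩
    simpa using hcd.reverse

theorem not_incCycSub_of_length_lt {c : List ℕ} {m : ℕ} (h : c.length < m) :
    ¬ IncCycSub c m := by
  rintro ⟨r, s, hs, rfl, -⟩
  simpa using h.trans_le hs.length_le

theorem length_le_one_of_pairwise_lt_of_pairwise_gt {s : List ℕ}
    (hinc : s.Pairwise (· < ·)) (hdec : s.Pairwise (· > ·)) : s.length ≤ 1 := by
  match s, hinc, hdec with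
  | [], _, _ | [_], _, _ => simp
  | a :: b :: _, hinc, hdec =>
    have hab : a < b := rel_of_pairwise_cons hinc mem_cons_self
    have hba : a > b := rel_of_pairwise_cons hdec mem_cons_self
    omega

theorem not_incCycSub_three_of_pairwise_gt {l : List ℕ} (hl : l.Pairwise (· > ·)) :
    ¬ IncCycSub l 3 := by
  rintro ⟨r, s, hs, hlen, hinc⟩
  rw [rotate_eq_drop_append_take_mod] at hs
  obtain ⟨s₁, s₂, rfl, hs₁, hs₂⟩ := sublist_append_iff.mp hs
  have h₁ := length_le_one_of_pairwise_lt_of_pairwise_gt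
    (hinc.sublist (sublist_append_left _ _)) (hl.sublist (hs₁.trans (drop_sublist _ _)))
  have h₂ := length_le_one_of_pairwise_lt_of_pairwise_gt
    (hinc.sublist (sublist_append_right _ _)) (hl.sublist (hs₂.trans (take_sublist _ _)))
  simp only [length_append] at hlen
  omega

theorem pairwise_gt_cons_of_not_incCycSub_three {a : ℕ} {t : List ℕ} (ht : t.Nodup)
    (hlt : ∀ x ∈ t, x < a) (h : ¬ IncCycSub (a :: t) 3) : (a :: t).Pairwise (· > ·) := by
  refine pairwise_cons.2 ⟨hlt, pairwise_iff_forall_sublist.2 fun {x y} hxy => ?_⟩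
  have hne : x ≠ y := pairwise_iff_forall_sublist.1 ht hxy
  by_contra hle
  have hxy' : x < y := by omega
  have hx := hlt x (hxy.subset (by simp))
  have hy := hlt y (hxy.subset (by simp))
  refine h ⟨1, [x, y, a], ?_, rfl, pairwise_cons.2 ⟨?_, pairwise_pair.2 hy⟩⟩
  · simpa using hxy.append (Sublist.refl [a])
  · simp [hxy', hx]

theorem isRotated_of_not_incCycSub_three {c l : List ℕ} (hcl : c ~ l)
    (hl : l.Pairwise (· > ·)) (hc : ¬ IncCycSub c 3) : c ~r l := by
  obtain _ | ⟨a, l'⟩ := l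
  · simp [perm_nil.1 hcl]
  obtain ⟨u, v, rfl⟩ := append_of_mem (hcl.symm.subset mem_cons_self)
  have hrot : u ++ a :: v ~r a :: (v ++ u) := by
    rw [← cons_append]; exact isRotated_append
  have hperm : v ++ u ~ l' := (hrot.perm.symm.trans hcl).cons_inv
  have hl' := pairwise_cons.1 hl
  have hsorted : (a :: (v ++ u)).Pairwise (· > ·) :=
    pairwise_gt_cons_of_not_incCycSub_three (hperm.nodup_iff.2 (hl'.2.imp ne_of_gt))
      (fun x hx => hl'.1 x (hperm.subset hx)) (mt hrot.incCycSub_iff.2 hc)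
  have heq := (hperm.cons a).eq_of_pairwise (fun x y _ _ hxy hyx => absurd hxy (lt_asymm hyx))
    hsorted hl
  exact heq ▸ hrot

theorem not_incCycSub_three_iff_isRotated {c l : List ℕ} (hcl : c ~ l)
    (hl : l.Pairwise (· > ·)) : ¬ IncCycSub c 3 ↔ c ~r l :=
  ⟨isRotated_of_not_incCycSub_three hcl hl,
    fun h => mt h.incCycSub_iff.1 (not_incCycSub_three_of_pairwise_gt hl)⟩

theorem not_incCycSub_and_not_decCycSub_iff_of_le_two {k ℓ : ℕ} (hk : 1 ≤ k) (hk2 : k ≤ 2)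
    (hl : 1 ≤ ℓ) {c : List ℕ} (hc : c ~ range' 1 ((k - 1) * (ℓ - 1) + 1)) :
    (¬ IncCycSub c (k + 1) ∧ ¬ DecCycSub c (ℓ + 1)) ↔
      c ~r (range' 1 ((k - 1) * (ℓ - 1) + 1)).reverse := by
  have hlen : c.length = (k - 1) * (ℓ - 1) + 1 := by simp [hc.length_eq]
  have hdec : ¬ DecCycSub c (ℓ + 1) := by
    rw [decCycSub_iff_incCycSub_reverse]
    refine not_incCycSub_of_length_lt ?_
    interval_cases k <;> simp [hlen] <;> omega
  have hinc : IncCycSub c (k + 1) ↔ IncCycSub c 3 := by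
    interval_cases k
    · simp only [Nat.sub_self, zero_mul, zero_add] at hlen
      exact iff_of_false (not_incCycSub_of_length_lt (by omega))
        (not_incCycSub_of_length_lt (by omega))
    · rfl
  rw [hinc, and_iff_left hdec]
  exact not_incCycSub_three_iff_isRotated (hc.trans (reverse_perm _).symm)
    (pairwise_reverse.2 (pairwise_lt_range' _))

theorem extremal_unique_small (k ℓ : ℕ) (hk : 1 ≤ k) (hl : 1 ≤ ℓ)
    (hmin : min k ℓ ≤ 2) (c : List ℕ)
    (hc : c.Perm (List.range' 1 ((k-1)*(ℓ-1)+1))) :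
    (¬ IncCycSub c (k+1) ∧ ¬ DecCycSub c (ℓ+1)) ↔
      c.IsRotated (if k ≤ 2 then (List.range' 1 ((k-1)*(ℓ-1)+1)).reverse
                   else List.range' 1 ((k-1)*(ℓ-1)+1)) := by
  by_cases hk2 : k ≤ 2
  · rw [if_pos hk2]
    exact not_incCycSub_and_not_decCycSub_iff_of_le_two hk hk2 hl hc
  · rw [if_neg hk2]
    have hrev : c.reverse ~ range' 1 ((ℓ - 1) * (k - 1) + 1) :=
      (reverse_perm c).trans (mul_comm (ℓ - 1) (k - 1) ▸ hc)
    have := not_incCycSub_and_not_decCycSub_iff_of_le_two hl (by omega) hk hrev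
    rwa [← decCycSub_iff_incCycSub_reverse, decCycSub_iff_incCycSub_reverse (c := c.reverse),
      reverse_reverse, isRotated_reverse_iff, mul_comm, and_comm] at this
end

section
/- For min(k,ℓ) ≥ 2, the cyclic permutation (1, a_1, ..., a_{(k-1)(ℓ-1)}) of {1,...,(k-1)(ℓ-1)+1} has no increasing cyclic sub-permutation of length k+1 and no decreasing cyclic sub-permutation of length ℓ+1 if and only if the linear sequence [a_1-1, ..., a_{(k-1)(ℓ-1)}-1], viewed as a cyclic permutation of {1,...,(k-1)(ℓ-1)}, lies in S_{k-1,ℓ-1} (as a linear sequence) and, as a cyclic permutation, has no increasing cyclic sub-permutation of length k+1 and no decreasing cyclic sub-permutation of length ℓ+1. -/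
namespace List

variable {α β : Type*}

def HasPairwiseSublist (R : α → α → Prop) (l : List α) (m : ℕ) : Prop :=
  ∃ s, s <+ l ∧ s.length = m ∧ s.Pairwise R

def HasCyclicPairwiseSublist (R : α → α → Prop) (c : List α) (m : ℕ) : Prop :=
  ∃ r, HasPairwiseSublist R (c.rotate r) m

theorem exists_rotate_cons_eq_s16 (x : α) (a : List α) (r : ℕ) :
    ∃ l₁ l₂, (x :: a).rotate r = l₁ ++ x :: l₂ ∧ l₂ ++ l₁ = a := by
  rw [rotate_eq_drop_append_take_mod]
  rcases r % (x :: a).length with _ | j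
  · exact ⟨[], a, by simp, by simp⟩
  · exact ⟨a.drop j, a.take j, by simp, take_append_drop j a⟩

theorem sublist_rotate_cons {x : α} {a s : List α} {r : ℕ} (h : s <+ (x :: a).rotate r) :
    (∃ j, s <+ a.rotate j) ∨ ∃ s₁ s₂, s = s₁ ++ x :: s₂ ∧ s₂ ++ s₁ <+ a := by
  obtain ⟨l₁, l₂, hrot, rfl⟩ := exists_rotate_cons_eq_s16 x a r
  rw [hrot] at h
  obtain ⟨s₁, s', rfl, h₁, h'⟩ := sublist_append_iff.mp h
  rcases sublist_cons_iff.mp h' with h₂ | ⟨s₂, rfl, h₂⟩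
  · exact .inl ⟨l₂.length, by rw [rotate_append_length_eq]; exact h₁.append h₂⟩
  · exact .inr ⟨s₁, s₂, rfl, h₂.append h₁⟩

theorem exists_sublist_rotate_cons_of_sublist_rotate {x : α} {a s : List α} {j : ℕ}
    (h : s <+ a.rotate j) : ∃ r, s <+ (x :: a).rotate r := by
  rw [rotate_eq_drop_append_take_mod] at h
  set i := j % a.length
  refine ⟨(x :: a.take i).length, ?_⟩
  rw [show x :: a = (x :: a.take i) ++ a.drop i by simp, rotate_append_length_eq]
  exact h.trans ((Sublist.refl _).append (sublist_cons_self x _))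

theorem HasCyclicPairwiseSublist.cons {R : α → α → Prop} {x : α} {a : List α} {m : ℕ}
    (h : HasCyclicPairwiseSublist R a m) : HasCyclicPairwiseSublist R (x :: a) m := by
  obtain ⟨j, s, hs, hlen, hR⟩ := h
  obtain ⟨r, hr⟩ := exists_sublist_rotate_cons_of_sublist_rotate (x := x) hs
  exact ⟨r, s, hr, hlen, hR⟩

section Preorder

variable [Preorder α] {x : α} {a : List α} {m : ℕ}

theorem hasCyclicPairwiseSublist_lt_cons_succ_iff (hx : ∀ y ∈ a, x < y) :
    HasCyclicPairwiseSublist (· < ·) (x :: a) (m + 1) ↔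
      HasPairwiseSublist (· < ·) a m ∨ HasCyclicPairwiseSublist (· < ·) a (m + 1) := by
  constructor
  · rintro ⟨r, s, hs, hlen, hlt⟩
    rcases sublist_rotate_cons hs with ⟨j, hj⟩ | ⟨s₁, s₂, rfl, h₂₁⟩
    · exact .inr ⟨j, s, hj, hlen, hlt⟩
    · have hs₁ : s₁ = [] := eq_nil_iff_forall_not_mem.mpr fun y hy =>
        lt_asymm (hx y (h₂₁.subset (mem_append_right _ hy)))
          ((pairwise_append.mp hlt).2.2 y hy x mem_cons_self)
      subst hs₁
      refine .inl ⟨s₂, by simpa using h₂₁, by simpa using hlen, (pairwise_cons.mp hlt).2⟩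
  · rintro (⟨t, ht, hlen, hlt⟩ | h)
    · exact ⟨0, x :: t, by simpa using ht.cons_cons x, by simp [hlen],
        pairwise_cons.mpr ⟨fun y hy => hx y (ht.subset hy), hlt⟩⟩
    · exact h.cons

theorem hasCyclicPairwiseSublist_gt_cons_succ_iff (hx : ∀ y ∈ a, x < y) :
    HasCyclicPairwiseSublist (· > ·) (x :: a) (m + 1) ↔
      HasPairwiseSublist (· > ·) a m ∨ HasCyclicPairwiseSublist (· > ·) a (m + 1) := by
  constructor
  · rintro ⟨r, s, hs, hlen, hgt⟩
    rcases sublist_rotate_cons hs with ⟨j, hj⟩ | ⟨s₁, s₂, rfl, h₂₁⟩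
    · exact .inr ⟨j, s, hj, hlen, hgt⟩
    · have hx₂ := (pairwise_cons.mp (pairwise_append.mp hgt).2.1).1
      have hs₂ : s₂ = [] := eq_nil_iff_forall_not_mem.mpr fun y hy =>
        lt_asymm (hx y (h₂₁.subset (mem_append_left _ hy))) (hx₂ y hy)
      subst hs₂
      refine .inl ⟨s₁, by simpa using h₂₁, by simpa using hlen, (pairwise_append.mp hgt).1⟩
  · rintro (⟨t, ht, hlen, hgt⟩ | h)
    · refine ⟨1, t ++ [x], by simpa using ht, by simp [hlen], ?_⟩
      exact pairwise_append.mpr ⟨hgt, by simp, fun y hy => by simpa using hx y (ht.subset hy)⟩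
    · exact h.cons

end Preorder

theorem hasPairwiseSublist_map_iff {R : β → β → Prop} {S : α → α → Prop} {f : α → β}
    {l : List α} {m : ℕ} (hf : ∀ x ∈ l, ∀ y ∈ l, R (f x) (f y) ↔ S x y) :
    HasPairwiseSublist R (l.map f) m ↔ HasPairwiseSublist S l m := by
  constructor
  · rintro ⟨s, hs, rfl, hR⟩
    obtain ⟨t, ht, rfl⟩ := sublist_map_iff.mp hs
    refine ⟨t, ht, (length_map _).symm, (pairwise_map.mp hR).imp_of_mem ?_⟩
    exact fun hx hy => (hf _ (ht.subset hx) _ (ht.subset hy)).mp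
  · rintro ⟨t, ht, rfl, hS⟩
    refine ⟨t.map f, ht.map f, length_map _, pairwise_map.mpr (hS.imp_of_mem ?_)⟩
    exact fun hx hy => (hf _ (ht.subset hx) _ (ht.subset hy)).mpr

theorem hasCyclicPairwiseSublist_map_iff {R : β → β → Prop} {S : α → α → Prop} {f : α → β}
    {l : List α} {m : ℕ} (hf : ∀ x ∈ l, ∀ y ∈ l, R (f x) (f y) ↔ S x y) :
    HasCyclicPairwiseSublist R (l.map f) m ↔ HasCyclicPairwiseSublist S l m :=
  exists_congr fun r => by
    rw [← map_rotate]
    exact hasPairwiseSublist_map_iff fun x hx y hy => hf x (mem_rotate.mp hx) y (mem_rotate.mp hy)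

end List

open List in
theorem cyclic_linear_equiv_general (k ℓ : ℕ) (a : List ℕ)
    (hperm : (1 :: a).Perm (List.range' 1 ((k-1)*(ℓ-1)+1))) :
    (¬ IncCycSub (1 :: a) (k+1) ∧ ¬ DecCycSub (1 :: a) (ℓ+1)) ↔
      ((a.map (· - 1)).Perm (List.range' 1 ((k-1)*(ℓ-1))) ∧
       (¬ ∃ s : List ℕ, s.Sublist (a.map (· - 1)) ∧ s.length = k ∧ s.Pairwise (· < ·)) ∧
       (¬ ∃ s : List ℕ, s.Sublist (a.map (· - 1)) ∧ s.length = ℓ ∧ s.Pairwise (· > ·)) ∧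
       ¬ IncCycSub (a.map (· - 1)) (k+1) ∧ ¬ DecCycSub (a.map (· - 1)) (ℓ+1)) := by
  have ha : a ~ range' 2 ((k-1)*(ℓ-1)) := (hperm.trans (by rw [range'_succ])).cons_inv
  have ha' : (a.map (· - 1)) ~ range' 1 ((k-1)*(ℓ-1)) :=
    map_sub_range' (a := 1) (s := 2) (by norm_num) _ ▸ ha.map (· - 1)
  have hgt : ∀ y ∈ a, 1 < y := fun y hy => by
    have := mem_range'_1.mp (ha.subset hy); omega
  have hlt : ∀ x ∈ a, ∀ y ∈ a, x - 1 < y - 1 ↔ x < y := fun x hx y hy => by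
    have := hgt x hx; have := hgt y hy; omega
  have hgt' : ∀ x ∈ a, ∀ y ∈ a, x - 1 > y - 1 ↔ x > y := fun x hx y hy => hlt y hy x hx
  change (¬ HasCyclicPairwiseSublist (· < ·) (1 :: a) (k+1) ∧
      ¬ HasCyclicPairwiseSublist (· > ·) (1 :: a) (ℓ+1)) ↔
    (_ ∧ ¬ HasPairwiseSublist (· < ·) (a.map (· - 1)) k ∧
      ¬ HasPairwiseSublist (· > ·) (a.map (· - 1)) ℓ ∧
      ¬ HasCyclicPairwiseSublist (· < ·) (a.map (· - 1)) (k+1) ∧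
      ¬ HasCyclicPairwiseSublist (· > ·) (a.map (· - 1)) (ℓ+1))
  rw [hasCyclicPairwiseSublist_lt_cons_succ_iff hgt, hasCyclicPairwiseSublist_gt_cons_succ_iff hgt,
    hasPairwiseSublist_map_iff hlt, hasPairwiseSublist_map_iff hgt',
    hasCyclicPairwiseSublist_map_iff hlt, hasCyclicPairwiseSublist_map_iff hgt']
  tauto

theorem cyclic_linear_equiv (k ℓ : ℕ) (hk : 2 ≤ k) (hl : 2 ≤ ℓ) (a : List ℕ)
    (hperm : (1 :: a).Perm (List.range' 1 ((k-1)*(ℓ-1)+1))) :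
    (¬ IncCycSub (1 :: a) (k+1) ∧ ¬ DecCycSub (1 :: a) (ℓ+1)) ↔
      ((a.map (· - 1)).Perm (List.range' 1 ((k-1)*(ℓ-1))) ∧
       (¬ ∃ s : List ℕ, s.Sublist (a.map (· - 1)) ∧ s.length = k ∧ s.Pairwise (· < ·)) ∧
       (¬ ∃ s : List ℕ, s.Sublist (a.map (· - 1)) ∧ s.length = ℓ ∧ s.Pairwise (· > ·)) ∧
       ¬ IncCycSub (a.map (· - 1)) (k+1) ∧ ¬ DecCycSub (a.map (· - 1)) (ℓ+1)) :=
  cyclic_linear_equiv_general k ℓ a hperm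
end
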